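/- arXiv:1207.1081 — 5 statements merged into one kernel-verified Lean document; each statement's English description precedes it below -/
import Mathlib

section
/- For all real numbers p, θ with 2 ≤ p ≤ θ, one has (4(θ+1)/(pθ−1))·t₀⁺ > 8, where t₀⁺ is defined from p and θ as in the context. -/
open MeasureTheory

noncomputable section

/-- The Laplacian of `u : ℝ^N → ℝ`, as the sum of second partial derivatives. -/
def lap {N : ℕ} (u : EuclideanSpace ℝ (Fin N) → ℝ) (x : EuclideanSpace ℝ (Fin N)) : ℝ :=
  ∑ i, fderiv ℝ (fun y => fderiv ℝ u y (EuclideanSpace.single i 1)) x (EuclideanSpace.single i 1)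

/-- `z = pθ(p+1)/(θ+1)`. -/
def zpar (p θ : ℝ) : ℝ := p * θ * (p + 1) / (θ + 1)

/-- `t₀⁻ = √z − √(z − √z)`. -/
def t0minus (p θ : ℝ) : ℝ :=
  Real.sqrt (zpar p θ) - Real.sqrt (zpar p θ - Real.sqrt (zpar p θ))

/-- `t₀⁺ = √z + √(z − √z)`. -/
def t0plus (p θ : ℝ) : ℝ :=
  Real.sqrt (zpar p θ) + Real.sqrt (zpar p θ - Real.sqrt (zpar p θ))

/-- A positive (classical, smooth) solution of the Lane–Emden system `−Δu = v^p`,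
`−Δv = u^θ` on `ℝ^N`. -/
def IsPositiveSolution {N : ℕ} (p θ : ℝ) (u v : EuclideanSpace ℝ (Fin N) → ℝ) : Prop :=
  ContDiff ℝ (⊤ : ℕ∞) u ∧ ContDiff ℝ (⊤ : ℕ∞) v ∧ (∀ x, 0 < u x) ∧ (∀ x, 0 < v x) ∧
    (∀ x, -lap u x = v x ^ p) ∧ (∀ x, -lap v x = u x ^ θ)

/-- Stability of a positive solution of the Lane–Emden system: there exist smooth positive
`ζ, χ` with `−Δζ = p v^{p-1} χ` and `−Δχ = θ u^{θ-1} ζ`. -/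
def IsStable {N : ℕ} (p θ : ℝ) (u v : EuclideanSpace ℝ (Fin N) → ℝ) : Prop :=
  ∃ ζ χ : EuclideanSpace ℝ (Fin N) → ℝ,
    ContDiff ℝ (⊤ : ℕ∞) ζ ∧ ContDiff ℝ (⊤ : ℕ∞) χ ∧ (∀ x, 0 < ζ x) ∧ (∀ x, 0 < χ x) ∧
    (∀ x, -lap ζ x = p * v x ^ (p - 1) * χ x) ∧
    (∀ x, -lap χ x = θ * u x ^ (θ - 1) * ζ x)

/-- A positive bounded solution of the Lane–Emden Dirichlet problem on the half-space
`{x : ℝ^N | x i > 0}` (with `i` the distinguished coordinate): `u, v` are bounded on the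
closed half-space, continuous there, smooth and positive on the open half-space, solve
`−Δu = v^p`, `−Δv = u^θ` there, and vanish on the boundary. -/
def IsHalfSpaceSolution {N : ℕ} (i : Fin N) (p θ : ℝ)
    (u v : EuclideanSpace ℝ (Fin N) → ℝ) : Prop :=
  (∃ M : ℝ, ∀ x, 0 ≤ x i → |u x| ≤ M ∧ |v x| ≤ M) ∧
  ContinuousOn u {x | 0 ≤ x i} ∧ ContinuousOn v {x | 0 ≤ x i} ∧
  ContDiffOn ℝ (⊤ : ℕ∞) u {x | 0 < x i} ∧ ContDiffOn ℝ (⊤ : ℕ∞) v {x | 0 < x i} ∧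
  (∀ x, 0 < x i → 0 < u x ∧ 0 < v x) ∧
  (∀ x, 0 < x i → -lap u x = v x ^ p ∧ -lap v x = u x ^ θ) ∧
  (∀ x, x i = 0 → u x = 0 ∧ v x = 0)

/-- For `2 ≤ p ≤ θ` one has `(4(θ+1)/(pθ−1))·t₀⁺ > 8`. -/
theorem bound_gt_eight (p θ : ℝ) (hp2 : 2 ≤ p) (hpθ : p ≤ θ) :
    8 < 4 * (θ + 1) / (p * θ - 1) * t0plus p θ := by
  have hθ1 : (0:ℝ) < θ + 1 := by linarith
  have hpθ1 : 0 < p * θ - 1 := by nlinarith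
  set z := zpar p θ with hzdef
  have hz1 : p ^ 2 ≤ z := by
    rw [hzdef, zpar, le_div_iff₀ hθ1]; nlinarith
  have hz2 : z < p ^ 2 + p := by
    rw [hzdef, zpar, div_lt_iff₀ hθ1]; nlinarith
  have hz0 : 0 ≤ z := by nlinarith
  set w := Real.sqrt z with hwdef
  have hw2 : w ^ 2 = z := Real.sq_sqrt hz0
  have hwp : p ≤ w := by
    rw [hwdef]
    exact Real.le_sqrt' (by linarith) |>.mpr hz1
  have hw2' : 2 ≤ w := le_trans hp2 hwp
  have hzw : w ≤ z := by nlinarith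
  set s := Real.sqrt (z - w) with hsdef
  have hs0 : 0 ≤ s := Real.sqrt_nonneg _
  have hs2 : s ^ 2 = z - w := Real.sq_sqrt (by linarith)
  have key1 : 4 * w ^ 2 - 2 * w - 1 < 4 * w * s := by
    have hB : 0 ≤ 4 * w ^ 2 - 2 * w - 1 := by nlinarith
    have hA : 0 ≤ 4 * w * s := by positivity
    have hsq : (4 * w ^ 2 - 2 * w - 1) ^ 2 < (4 * w * s) ^ 2 := by nlinarith
    nlinarith [sq_nonneg (4 * w * s + (4 * w ^ 2 - 2 * w - 1))]
  have key2 : 8 * w ^ 3 < p * (8 * w ^ 2 + 6 * w - 1) := by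
    nlinarith [sq_nonneg (w - p), mul_pos (by linarith : (0:ℝ) < w)
      (by nlinarith : (0:ℝ) < p^2 + p - w^2), sq_nonneg (w*p - w^2)]
  have hmain : 2 * z < p * (w + s + 2) := by nlinarith
  have hfin : 2 * (p * θ - 1) < (θ + 1) * (w + s) := by
    have h2z : z * (θ + 1) = p * θ * (p + 1) := by
      rw [hzdef, zpar]; field_simp
    nlinarith [mul_pos (by linarith : (0:ℝ) < p) hθ1]
  rw [t0plus, ← hzdef, ← hwdef, ← hsdef, div_mul_eq_mul_div, lt_div_iff₀ hpθ1]
  nlinarith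
end
end

section
/- Let N be a positive integer and let p, θ be real numbers with 1 < p ≤ θ. Let (u, v) be a positive solution (not necessarily stable) of the Lane-Emden system −Δu = v^p, −Δv = u^θ on ℝ^N. Then (θ+1)·v(x)^{p+1} ≥ (p+1)·u(x)^{θ+1} for every x ∈ ℝ^N. -/
open MeasureTheory

open Filter Topology

noncomputable section

namespace LE10
variable {N : ℕ}
def pd (i : Fin N) (f : EuclideanSpace ℝ (Fin N) → ℝ) (x : EuclideanSpace ℝ (Fin N)) : ℝ :=
  fderiv ℝ f x (EuclideanSpace.single i 1)
lemma lap_eq (f : EuclideanSpace ℝ (Fin N) → ℝ) (x : EuclideanSpace ℝ (Fin N)) :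
    lap f x = ∑ i, fderiv ℝ (pd i f) x (EuclideanSpace.single i 1) := rfl

lemma contDiff_pd {f : EuclideanSpace ℝ (Fin N) → ℝ} (hf : ContDiff ℝ 2 f) (i : Fin N) :
    ContDiff ℝ 1 (pd i f) := by
  have h1 : ContDiff ℝ 1 (fun y => fderiv ℝ f y) := hf.fderiv_right (by norm_num)
  exact (ContinuousLinearMap.apply ℝ ℝ (EuclideanSpace.single i 1)).contDiff.comp h1

lemma differentiable_pd {f : EuclideanSpace ℝ (Fin N) → ℝ} (hf : ContDiff ℝ 2 f) (i : Fin N) :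
    Differentiable ℝ (pd i f) :=
  (contDiff_pd hf i).differentiable one_ne_zero

/-- Second derivative test: at an interior local maximum of `F`, `lap F ≤ 0`. -/
lemma lap_nonpos_of_isLocalMax {F : EuclideanSpace ℝ (Fin N) → ℝ} {y : EuclideanSpace ℝ (Fin N)}
    (hd : ∀ᶠ x in 𝓝 y, DifferentiableAt ℝ F x)
    (hd2 : ∀ i, DifferentiableAt ℝ (pd i F) y)
    (hmax : IsLocalMax F y) : lap F y ≤ 0 := by
  rw [lap_eq]
  apply Finset.sum_nonpos
  intro i _
  set c : EuclideanSpace ℝ (Fin N) := EuclideanSpace.single i 1 with hc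
  set ℓ : ℝ → EuclideanSpace ℝ (Fin N) := fun t => y + t • c with hℓ
  have hℓ0 : ℓ 0 = y := by simp [hℓ]
  have hℓd : ∀ t : ℝ, HasDerivAt ℓ c t := by
    intro t
    simpa [hℓ] using ((hasDerivAt_id t).smul_const c).const_add y
  have hℓc : Continuous ℓ := by continuity
  set G : ℝ → ℝ := fun t => F (ℓ t) with hG
  set ψ : ℝ → ℝ := fun t => pd i F (ℓ t) with hψ
  have htend : Tendsto ℓ (𝓝 (0:ℝ)) (𝓝 y) := by
    have := hℓc.continuousAt (x := (0:ℝ))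
    rwa [ContinuousAt, hℓ0] at this
  -- eventual facts pulled back to the line
  have hev : ∀ᶠ t in 𝓝 (0:ℝ), DifferentiableAt ℝ F (ℓ t) ∧ G t ≤ G 0 := by
    have h1 := htend.eventually hd
    have h2 : ∀ᶠ t in 𝓝 (0:ℝ), G t ≤ G 0 := by
      have := htend.eventually hmax
      simpa [hG, hℓ0] using this
    exact h1.and h2
  obtain ⟨δ, hδpos, hδ⟩ := Metric.eventually_nhds_iff.mp hev
  have hGd : ∀ t : ℝ, dist t 0 < δ → HasDerivAt G (ψ t) t := by
    intro t ht
    have h1 := (hδ ht).1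
    exact h1.hasFDerivAt.comp_hasDerivAt t (hℓd t)
  -- G has a local max at 0 with derivative ψ 0, hence ψ 0 = 0
  have hGmax : IsLocalMax G 0 := by
    filter_upwards [Metric.eventually_nhds_iff.mpr ⟨δ, hδpos, fun {t} ht => hδ ht⟩] with t ht
    exact ht.2
  have hψ00 : ψ 0 = 0 := by
    have hd0 : HasDerivAt G (ψ 0) 0 := hGd 0 (by simpa using hδpos)
    have := hGmax.deriv_eq_zero
    rw [hd0.deriv] at this
    exact this
  -- ψ has derivative T := fderiv (pd i F) y c at 0
  set T : ℝ := fderiv ℝ (pd i F) y c with hT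
  have hψd : HasDerivAt ψ T 0 := by
    have h0 : HasFDerivAt (pd i F) (fderiv ℝ (pd i F) y) y := (hd2 i).hasFDerivAt
    have : HasFDerivAt (pd i F) (fderiv ℝ (pd i F) y) (ℓ 0) := by rwa [hℓ0]
    exact this.comp_hasDerivAt 0 (hℓd 0)
  -- suppose T > 0, derive contradiction
  by_contra hTpos
  push_neg at hTpos
  -- ψ t > 0 for small positive t
  have hslope : Tendsto (fun t => ψ t / t) (𝓝[≠] (0:ℝ)) (𝓝 T) := by
    have h2 := hasDerivAt_iff_tendsto_slope.mp hψd
    have heq : (slope ψ 0) = fun t => ψ t / t := by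
      funext t
      simp [slope, hψ00, div_eq_inv_mul]
    rwa [heq] at h2
  have hev2 : ∀ᶠ t in 𝓝[≠] (0:ℝ), 0 < ψ t / t :=
    hslope.eventually (eventually_gt_nhds hTpos)
  rw [eventually_nhdsWithin_iff] at hev2
  obtain ⟨δ₁, hδ₁pos, hδ₁'⟩ := Metric.eventually_nhds_iff.mp hev2
  have hδ₁ : ∀ t : ℝ, dist t 0 < δ₁ → t ≠ 0 → 0 < ψ t / t := fun t h1 h2 => hδ₁' h1 h2
  set t₀ : ℝ := min δ δ₁ / 2 with ht₀
  have ht₀pos : 0 < t₀ := by positivity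
  have ht₀δ : t₀ < δ := by
    have : min δ δ₁ ≤ δ := min_le_left _ _
    simp only [ht₀]; linarith
  have ht₀δ₁ : t₀ < δ₁ := by
    have : min δ δ₁ ≤ δ₁ := min_le_right _ _
    simp only [ht₀]; linarith
  -- G strictly monotone on [0, t₀]
  have hmono : StrictMonoOn G (Set.Icc 0 t₀) := by
    apply strictMonoOn_of_deriv_pos (convex_Icc 0 t₀)
    · intro t ht
      have htd : dist t 0 < δ := by
        simp only [Real.dist_eq, sub_zero]
        rw [abs_of_nonneg ht.1]
        exact lt_of_le_of_lt ht.2 ht₀δ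
      exact (hGd t htd).differentiableAt.continuousAt.continuousWithinAt
    · intro t ht
      rw [interior_Icc] at ht
      have htpos : 0 < t := ht.1
      have htd : dist t 0 < δ := by
        simp only [Real.dist_eq, sub_zero, abs_of_pos htpos]
        exact lt_trans ht.2 ht₀δ
      have hψt : 0 < ψ t / t := by
        apply hδ₁
        · simp only [Real.dist_eq, sub_zero, abs_of_pos htpos]
          exact lt_trans ht.2 ht₀δ₁
        · exact htpos.ne'
      have : 0 < ψ t := by
        have := mul_pos hψt htpos
        rwa [div_mul_cancel₀] at this
        exact htpos.ne'
      rwa [(hGd t htd).deriv]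
  have h1 : G 0 < G t₀ := hmono (by simp [le_of_lt ht₀pos]) (by simp [le_of_lt ht₀pos]) ht₀pos
  have h2 : G t₀ ≤ G 0 := by
    have hdist : dist t₀ 0 < δ := by
      simp only [Real.dist_eq, sub_zero, abs_of_pos ht₀pos]
      exact ht₀δ
    exact (hδ hdist).2
  linarith

section calculus

variable {v f g : EuclideanSpace ℝ (Fin N) → ℝ} {y : EuclideanSpace ℝ (Fin N)} {b A : ℝ}

lemma pd_rpow (hv : Differentiable ℝ v) (hy : v y ≠ 0) (b : ℝ) (i : Fin N) :
    pd i (fun z => v z ^ b) y = b * v y ^ (b - 1) * pd i v y := by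
  unfold pd
  rw [((hv y).hasFDerivAt.rpow_const (p := b) (Or.inl hy)).fderiv]
  simp [smul_eq_mul]

lemma ev_pos (hv : Continuous v) (hy : 0 < v y) : ∀ᶠ z in 𝓝 y, 0 < v z :=
  (hv.tendsto y).eventually (eventually_gt_nhds hy)

lemma pd_rpow_eventually (hv : ContDiff ℝ 2 v) (hy : 0 < v y) (b : ℝ) (i : Fin N) :
    pd i (fun z => v z ^ b) =ᶠ[𝓝 y] fun z => (b * v z ^ (b - 1)) * pd i v z := by
  filter_upwards [ev_pos hv.continuous hy] with z hz
  rw [pd_rpow (hv.differentiable (by norm_num)) hz.ne' b i]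

lemma diff_pd_rpow (hv : ContDiff ℝ 2 v) (hy : 0 < v y) (b : ℝ) (i : Fin N) :
    DifferentiableAt ℝ (pd i (fun z => v z ^ b)) y := by
  have h1 : DifferentiableAt ℝ (fun z => b * v z ^ (b - 1)) y :=
    ((hv.differentiable (by norm_num) y).rpow_const (Or.inl hy.ne')).const_mul b
  have h2 : DifferentiableAt ℝ (pd i v) y := differentiable_pd hv i y
  exact (h1.mul h2).congr_of_eventuallyEq (pd_rpow_eventually hv hy b i)

lemma lap_rpow_at (hv : ContDiff ℝ 2 v) (hy : 0 < v y) (b : ℝ) :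
    lap (fun z => v z ^ b) y
      = b * v y ^ (b - 1) * lap v y + b * (b - 1) * v y ^ (b - 2) * ∑ i, (pd i v y) ^ 2 := by
  have hvd : Differentiable ℝ v := hv.differentiable (by norm_num)
  rw [lap_eq]
  have hterm : ∀ i : Fin N, fderiv ℝ (pd i (fun z => v z ^ b)) y (EuclideanSpace.single i 1)
      = b * (b - 1) * v y ^ (b - 2) * (pd i v y) ^ 2
        + b * v y ^ (b - 1) * fderiv ℝ (pd i v) y (EuclideanSpace.single i 1) := by
    intro i
    rw [(pd_rpow_eventually hv hy b i).fderiv_eq]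
    have h1 : DifferentiableAt ℝ (fun z => b * v z ^ (b - 1)) y :=
      ((hvd y).rpow_const (Or.inl hy.ne')).const_mul b
    have h2 : DifferentiableAt ℝ (pd i v) y := differentiable_pd hv i y
    rw [fderiv_fun_mul h1 h2]
    have h3 : fderiv ℝ (fun z => b * v z ^ (b - 1)) y
        = b • (((b - 1) * v y ^ (b - 1 - 1)) • fderiv ℝ v y) := by
      rw [fderiv_const_mul ((hvd y).rpow_const (Or.inl hy.ne'))]
      rw [((hvd y).hasFDerivAt.rpow_const (Or.inl hy.ne')).fderiv]
    rw [h3]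
    simp only [ContinuousLinearMap.add_apply, ContinuousLinearMap.smul_apply, smul_eq_mul]
    have : b - 1 - 1 = b - 2 := by ring
    rw [this]
    unfold pd
    ring
  rw [Finset.sum_congr rfl (fun i _ => hterm i), Finset.sum_add_distrib]
  rw [lap_eq, Finset.mul_sum, Finset.mul_sum]
  ring

lemma pd_const_mul_eventually (hf : ∀ᶠ z in 𝓝 y, DifferentiableAt ℝ f z) (A : ℝ) (i : Fin N) :
    pd i (fun z => A * f z) =ᶠ[𝓝 y] fun z => A * pd i f z := by
  filter_upwards [hf] with z hz
  unfold pd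
  rw [fderiv_const_mul hz]
  simp

lemma diff_pd_const_mul {i : Fin N} (hf : ∀ᶠ z in 𝓝 y, DifferentiableAt ℝ f z)
    (hf2 : DifferentiableAt ℝ (pd i f) y) (A : ℝ) :
    DifferentiableAt ℝ (pd i (fun z => A * f z)) y :=
  (hf2.const_mul A).congr_of_eventuallyEq (pd_const_mul_eventually hf A i)

lemma lap_const_mul_at (hf : ∀ᶠ z in 𝓝 y, DifferentiableAt ℝ f z)
    (hf2 : ∀ i, DifferentiableAt ℝ (pd i f) y) (A : ℝ) :
    lap (fun z => A * f z) y = A * lap f y := by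
  rw [lap_eq, lap_eq, Finset.mul_sum]
  refine Finset.sum_congr rfl (fun i _ => ?_)
  rw [(pd_const_mul_eventually hf A i).fderiv_eq, fderiv_const_mul (hf2 i)]
  simp

lemma pd_sub_eventually (hf : ∀ᶠ z in 𝓝 y, DifferentiableAt ℝ f z)
    (hg : ∀ᶠ z in 𝓝 y, DifferentiableAt ℝ g z) (i : Fin N) :
    pd i (fun z => f z - g z) =ᶠ[𝓝 y] fun z => pd i f z - pd i g z := by
  filter_upwards [hf, hg] with z hzf hzg
  unfold pd
  rw [fderiv_fun_sub hzf hzg]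
  simp

lemma diff_pd_sub {i : Fin N} (hf : ∀ᶠ z in 𝓝 y, DifferentiableAt ℝ f z)
    (hg : ∀ᶠ z in 𝓝 y, DifferentiableAt ℝ g z)
    (hf2 : DifferentiableAt ℝ (pd i f) y) (hg2 : DifferentiableAt ℝ (pd i g) y) :
    DifferentiableAt ℝ (pd i (fun z => f z - g z)) y :=
  (hf2.sub hg2).congr_of_eventuallyEq (pd_sub_eventually hf hg i)

lemma lap_sub_at (hf : ∀ᶠ z in 𝓝 y, DifferentiableAt ℝ f z)
    (hg : ∀ᶠ z in 𝓝 y, DifferentiableAt ℝ g z)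
    (hf2 : ∀ i, DifferentiableAt ℝ (pd i f) y) (hg2 : ∀ i, DifferentiableAt ℝ (pd i g) y) :
    lap (fun z => f z - g z) y = lap f y - lap g y := by
  rw [lap_eq, lap_eq, lap_eq, ← Finset.sum_sub_distrib]
  refine Finset.sum_congr rfl (fun i _ => ?_)
  rw [(pd_sub_eventually hf hg i).fderiv_eq, fderiv_fun_sub (hf2 i) (hg2 i)]
  simp

end calculus

/-- Numerical facts about the constants. -/
lemma const_facts {p θ a c β : ℝ} (hp : 1 < p) (hpθ : p ≤ θ)
    (ha : a = (p + 1) / (θ + 1)) (hc : c = a ^ (-(θ + 1)⁻¹)) (hβ : β = θ - 1 / a) :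
    0 < a ∧ a ≤ 1 ∧ 1 ≤ c ∧ 0 < c ∧ 0 < β ∧ a * (θ + 1) = p + 1 ∧ c ^ (θ + 1) = a⁻¹ := by
  have hθ1 : (0:ℝ) < θ + 1 := by linarith
  have hp1 : (0:ℝ) < p + 1 := by linarith
  have hapos : 0 < a := by rw [ha]; positivity
  have ha1 : a ≤ 1 := by
    rw [ha, div_le_one hθ1]; linarith
  have hc1 : 1 ≤ c := by
    rw [hc]
    exact Real.one_le_rpow_of_pos_of_le_one_of_nonpos hapos ha1 (neg_nonpos.mpr (by positivity))
  have hβpos : 0 < β := by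
    have h1a : 1 / a = (θ + 1) / (p + 1) := by rw [ha, one_div_div]
    rw [hβ, h1a, sub_pos, div_lt_iff₀ hp1]
    nlinarith
  have haθ : a * (θ + 1) = p + 1 := by
    rw [ha]; field_simp
  have hcθ : c ^ (θ + 1) = a⁻¹ := by
    rw [hc, ← Real.rpow_mul hapos.le]
    have : -(θ + 1)⁻¹ * (θ + 1) = -1 := by field_simp
    rw [this, Real.rpow_neg_one]
  exact ⟨hapos, ha1, hc1, lt_of_lt_of_le one_pos hc1, hβpos, haθ, hcθ⟩


lemma key_arith {p θ a c β U V : ℝ} (hp : 1 < p) (hpθ : p ≤ θ)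
    (ha : a = (p + 1) / (θ + 1)) (hc : c = a ^ (-(θ + 1)⁻¹)) (hβ : β = θ - 1 / a)
    (hU : 0 < U) (hV : 0 < V) (hW : 0 < U - c * V ^ a) :
    a * (U - c * V ^ a) ^ (1 + β) ≤ -(V ^ p) + c * a * V ^ (a - 1) * U ^ θ := by
  obtain ⟨hapos, ha1, hc1, hcpos, hβpos, haθ, hcθ⟩ := const_facts hp hpθ ha hc hβ
  set W := U - c * V ^ a with hWdef
  have hVa : 0 < V ^ a := Real.rpow_pos_of_pos hV a
  have hUgt : c * V ^ a < U := by linarith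
  have hWU : W ≤ U := by rw [hWdef]; nlinarith
  have hθ1 : (1:ℝ) ≤ θ := le_trans hp.le hpθ
  have hpa : a * θ + a - 1 = p := by nlinarith [haθ]
  -- (E1)  V^p ≤ c*c*a*(V^(a-1)*V^a)*U^(θ-1)
  have hccc : c * c * c ^ (θ - 1) = c ^ (θ + 1) := by
    rw [show θ + (1:ℝ) = 1 + (1 + (θ - 1)) by ring, Real.rpow_add hcpos,
      Real.rpow_add hcpos, Real.rpow_one]
    ring
  have h2 : (c * V ^ a) ^ (θ - 1) ≤ U ^ (θ - 1) :=
    Real.rpow_le_rpow (by positivity) hUgt.le (by linarith)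
  have h3 : (c * V ^ a) ^ (θ - 1) = c ^ (θ - 1) * V ^ (a * (θ - 1)) := by
    rw [Real.mul_rpow hcpos.le hVa.le, ← Real.rpow_mul hV.le]
  have hexp : (a - 1) + a + a * (θ - 1) = p := by rw [← hpa]; ring
  have key1 : V ^ p ≤ c * c * a * (V ^ (a - 1) * V ^ a) * U ^ (θ - 1) := by
    have hmono : c * c * a * (V ^ (a - 1) * V ^ a) * (c ^ (θ - 1) * V ^ (a * (θ - 1)))
        ≤ c * c * a * (V ^ (a - 1) * V ^ a) * U ^ (θ - 1) := by
      rw [← h3]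
      exact mul_le_mul_of_nonneg_left h2 (by positivity)
    refine le_trans (le_of_eq ?_) hmono
    have comb : V ^ (a - 1) * V ^ a * V ^ (a * (θ - 1)) = V ^ p := by
      rw [← Real.rpow_add hV, ← Real.rpow_add hV, hexp]
    calc V ^ p = a * a⁻¹ * V ^ p := by field_simp
      _ = a * (c * c * c ^ (θ - 1)) * (V ^ (a - 1) * V ^ a * V ^ (a * (θ - 1))) := by
          rw [hccc, hcθ, comb]
      _ = c * c * a * (V ^ (a - 1) * V ^ a) * (c ^ (θ - 1) * V ^ (a * (θ - 1))) := by ring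
  -- (E2)  a * W^(1+β) ≤ (c*a*V^(a-1)*U^(θ-1)) * W
  have hEnn : 0 ≤ a⁻¹ * (1 - a) := by
    have : 0 ≤ 1 - a := by linarith
    positivity
  have s1 : V ≤ (U / c) ^ a⁻¹ := by
    have hVaUc : V ^ a ≤ U / c := by rw [le_div_iff₀ hcpos]; nlinarith
    have hVid : (V ^ a) ^ a⁻¹ = V := by
      rw [← Real.rpow_mul hV.le, mul_inv_cancel₀ hapos.ne', Real.rpow_one]
    calc V = (V ^ a) ^ a⁻¹ := hVid.symm
      _ ≤ (U / c) ^ a⁻¹ := Real.rpow_le_rpow hVa.le hVaUc (inv_nonneg.mpr hapos.le)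
  have s2 : V ^ (1 - a) ≤ c * U ^ (a⁻¹ * (1 - a)) := by
    have t1 : V ^ (1 - a) ≤ ((U / c) ^ a⁻¹) ^ (1 - a) :=
      Real.rpow_le_rpow hV.le s1 (by linarith)
    have t2 : ((U / c) ^ a⁻¹) ^ (1 - a) = (U / c) ^ (a⁻¹ * (1 - a)) :=
      (Real.rpow_mul (by positivity) _ _).symm
    have t3 : (U / c) ^ (a⁻¹ * (1 - a)) = U ^ (a⁻¹ * (1 - a)) / c ^ (a⁻¹ * (1 - a)) :=
      Real.div_rpow hU.le hcpos.le _
    have t4 : (1:ℝ) ≤ c ^ (a⁻¹ * (1 - a)) := by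
      calc (1:ℝ) = c ^ (0:ℝ) := (Real.rpow_zero c).symm
        _ ≤ c ^ (a⁻¹ * (1 - a)) := Real.rpow_le_rpow_of_exponent_le hc1 hEnn
    calc V ^ (1 - a) ≤ (U / c) ^ (a⁻¹ * (1 - a)) := by rw [← t2]; exact t1
      _ = U ^ (a⁻¹ * (1 - a)) / c ^ (a⁻¹ * (1 - a)) := t3
      _ ≤ U ^ (a⁻¹ * (1 - a)) := div_le_self (by positivity) t4
      _ ≤ c * U ^ (a⁻¹ * (1 - a)) := le_mul_of_one_le_left (by positivity) hc1
  have s3 : U ^ ((a - 1) / a) ≤ c * V ^ (a - 1) := by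
    have e1 : U ^ ((a - 1) / a) = (U ^ (a⁻¹ * (1 - a)))⁻¹ := by
      rw [show (a - 1) / a = -(a⁻¹ * (1 - a)) by field_simp; ring, Real.rpow_neg hU.le]
    have e2 : V ^ (a - 1) = (V ^ (1 - a))⁻¹ := by
      rw [show a - 1 = -(1 - a) by ring, Real.rpow_neg hV.le]
    have e3 : (c * U ^ (a⁻¹ * (1 - a)))⁻¹ ≤ (V ^ (1 - a))⁻¹ :=
      inv_anti₀ (Real.rpow_pos_of_pos hV _) s2
    have e4 : c * (c * U ^ (a⁻¹ * (1 - a)))⁻¹ = (U ^ (a⁻¹ * (1 - a)))⁻¹ := by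
      rw [mul_inv, ← mul_assoc, mul_inv_cancel₀ hcpos.ne', one_mul]
    rw [e1, e2, ← e4]
    exact mul_le_mul_of_nonneg_left e3 hcpos.le
  have s4 : U ^ β ≤ c * V ^ (a - 1) * U ^ (θ - 1) := by
    have hsplit : U ^ β = U ^ ((a - 1) / a) * U ^ (θ - 1) := by
      rw [← Real.rpow_add hU, hβ]
      congr 1
      field_simp
      ring
    rw [hsplit]
    exact mul_le_mul_of_nonneg_right s3 (by positivity)
  have s5 : W ^ β ≤ U ^ β := Real.rpow_le_rpow hW.le hWU hβpos.le
  have key2 : a * W ^ (1 + β) ≤ c * a * V ^ (a - 1) * U ^ (θ - 1) * W := by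
    have e5 : W ^ (1 + β) = W * W ^ β := by
      rw [Real.rpow_add hW, Real.rpow_one]
    rw [e5]
    calc a * (W * W ^ β) ≤ a * (W * (c * V ^ (a - 1) * U ^ (θ - 1))) := by
          apply mul_le_mul_of_nonneg_left _ hapos.le
          exact mul_le_mul_of_nonneg_left (le_trans s5 s4) hW.le
      _ = c * a * V ^ (a - 1) * U ^ (θ - 1) * W := by ring
  -- (E3) expansion
  have hUθ : U ^ θ = U ^ (θ - 1) * U := by
    rw [show θ = (θ - 1) + 1 by ring, Real.rpow_add hU, Real.rpow_one]
    ring_nf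
  have expand : c * a * V ^ (a - 1) * U ^ θ
      = c * a * V ^ (a - 1) * U ^ (θ - 1) * W + c * c * a * (V ^ (a - 1) * V ^ a) * U ^ (θ - 1) := by
    rw [hWdef, hUθ]
    ring
  linarith [key1, key2, expand]


/-- the function `z ↦ R2 - ‖z - x₀‖²` (with `R2` a constant). -/
def gf (R2 : ℝ) (x₀ : EuclideanSpace ℝ (Fin N)) (z : EuclideanSpace ℝ (Fin N)) : ℝ :=
  R2 - ∑ j, (z j - x₀ j) * (z j - x₀ j)

lemma gf_contDiff (R2 : ℝ) (x₀ : EuclideanSpace ℝ (Fin N)) : ContDiff ℝ 2 (gf R2 x₀) := by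
  apply ContDiff.sub contDiff_const
  apply ContDiff.sum
  intro j _
  have h : ContDiff ℝ 2 (fun z : EuclideanSpace ℝ (Fin N) => z j - x₀ j) :=
    ContDiff.sub (by exact (EuclideanSpace.proj j : EuclideanSpace ℝ (Fin N) →L[ℝ] ℝ).contDiff) contDiff_const
  exact h.mul h

lemma gf_hasFDerivAt (R2 : ℝ) (x₀ z : EuclideanSpace ℝ (Fin N)) :
    HasFDerivAt (gf R2 x₀)
      (-(∑ j, ((z j - x₀ j) • (EuclideanSpace.proj j : EuclideanSpace ℝ (Fin N) →L[ℝ] ℝ)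
          + (z j - x₀ j) • (EuclideanSpace.proj j : EuclideanSpace ℝ (Fin N) →L[ℝ] ℝ)))) z := by
  apply HasFDerivAt.const_sub
  apply HasFDerivAt.fun_sum
  intro j _
  have hp : HasFDerivAt (fun y : EuclideanSpace ℝ (Fin N) => y j)
      (EuclideanSpace.proj j : EuclideanSpace ℝ (Fin N) →L[ℝ] ℝ) z :=
    (EuclideanSpace.proj j : EuclideanSpace ℝ (Fin N) →L[ℝ] ℝ).hasFDerivAt
  have h : HasFDerivAt (fun y : EuclideanSpace ℝ (Fin N) => y j - x₀ j)
      (EuclideanSpace.proj j : EuclideanSpace ℝ (Fin N) →L[ℝ] ℝ) z :=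
    hp.sub_const _
  exact h.mul h

lemma pd_gf (R2 : ℝ) (x₀ z : EuclideanSpace ℝ (Fin N)) (i : Fin N) :
    pd i (gf R2 x₀) z = -(2 * (z i - x₀ i)) := by
  unfold pd
  rw [(gf_hasFDerivAt R2 x₀ z).fderiv]
  simp only [ContinuousLinearMap.neg_apply, ContinuousLinearMap.sum_apply,
    ContinuousLinearMap.add_apply, ContinuousLinearMap.smul_apply, smul_eq_mul]
  have hproj : ∀ j : Fin N, (EuclideanSpace.proj j : EuclideanSpace ℝ (Fin N) →L[ℝ] ℝ)
      (EuclideanSpace.single i 1) = if j = i then 1 else 0 := by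
    intro j
    simp [EuclideanSpace.single_apply]
  rw [Finset.sum_congr rfl (fun j _ => by rw [hproj j])]
  have hsum : (∑ j, (((z j - x₀ j) * if j = i then 1 else 0)
        + (z j - x₀ j) * if j = i then 1 else 0))
      = ∑ j, (if j = i then (z j - x₀ j) + (z j - x₀ j) else 0) := by
    refine Finset.sum_congr rfl (fun j _ => ?_)
    split_ifs <;> ring
  rw [hsum, Finset.sum_ite_eq' Finset.univ i (fun j => (z j - x₀ j) + (z j - x₀ j))]
  simp only [Finset.mem_univ, if_true]
  ring

lemma lap_gf (R2 : ℝ) (x₀ z : EuclideanSpace ℝ (Fin N)) :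
    lap (gf R2 x₀) z = -(2 * N) := by
  rw [lap_eq]
  have hfun : ∀ i : Fin N, pd i (gf R2 x₀) = fun z => -(2 * (z i - x₀ i)) :=
    fun i => funext (fun z => pd_gf R2 x₀ z i)
  have hterm : ∀ i : Fin N,
      fderiv ℝ (pd i (gf R2 x₀)) z (EuclideanSpace.single i 1) = -2 := by
    intro i
    rw [hfun i]
    have hp : HasFDerivAt (fun y : EuclideanSpace ℝ (Fin N) => y i)
        (EuclideanSpace.proj i : EuclideanSpace ℝ (Fin N) →L[ℝ] ℝ) z :=
      (EuclideanSpace.proj i : EuclideanSpace ℝ (Fin N) →L[ℝ] ℝ).hasFDerivAt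
    have h : HasFDerivAt (fun y : EuclideanSpace ℝ (Fin N) => -(2 * (y i - x₀ i)))
        (-((2:ℝ) • (EuclideanSpace.proj i : EuclideanSpace ℝ (Fin N) →L[ℝ] ℝ))) z :=
      ((hp.sub_const _).const_mul 2).neg
    rw [h.fderiv]
    simp [EuclideanSpace.single_apply]
  rw [Finset.sum_congr rfl (fun i _ => hterm i)]
  simp [mul_comm]

lemma sum_pd_gf_sq (R2 : ℝ) (x₀ z : EuclideanSpace ℝ (Fin N)) :
    ∑ i, (pd i (gf R2 x₀) z) ^ 2 = 4 * (R2 - gf R2 x₀ z) := by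
  have h : R2 - gf R2 x₀ z = ∑ j, (z j - x₀ j) * (z j - x₀ j) := by
    unfold gf; ring
  rw [h, Finset.mul_sum]
  refine Finset.sum_congr rfl (fun i _ => ?_)
  rw [pd_gf]
  ring


/-- The differential inequality `lap w ≥ a * w^(1+β)` on `{w > 0}`. -/
lemma key_diffineq {p θ a c β : ℝ} (hp : 1 < p) (hpθ : p ≤ θ)
    (ha : a = (p + 1) / (θ + 1)) (hc : c = a ^ (-(θ + 1)⁻¹)) (hβ : β = θ - 1 / a)
    {u v : EuclideanSpace ℝ (Fin N) → ℝ}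
    (hu : ContDiff ℝ 2 u) (hv : ContDiff ℝ 2 v)
    (hup : ∀ x, 0 < u x) (hvp : ∀ x, 0 < v x)
    (hequ : ∀ x, -lap u x = v x ^ p) (heqv : ∀ x, -lap v x = u x ^ θ)
    (x : EuclideanSpace ℝ (Fin N)) (hWx : 0 < u x - c * v x ^ a) :
    a * (u x - c * v x ^ a) ^ (1 + β) ≤ lap (fun y => u y - c * v y ^ a) x := by
  obtain ⟨hapos, ha1, hc1, hcpos, hβpos, haθ, hcθ⟩ := const_facts hp hpθ ha hc hβ
  have hvd : Differentiable ℝ v := hv.differentiable (by norm_num)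
  have hva_diff : ∀ᶠ z in 𝓝 x, DifferentiableAt ℝ (fun y => v y ^ a) z :=
    Filter.Eventually.of_forall fun z => (hvd z).rpow_const (Or.inl (hvp z).ne')
  have hcva_diff : ∀ᶠ z in 𝓝 x, DifferentiableAt ℝ (fun y => c * v y ^ a) z := by
    filter_upwards [hva_diff] with z hz
    exact hz.const_mul c
  have hu_diff : ∀ᶠ z in 𝓝 x, DifferentiableAt ℝ u z :=
    Filter.Eventually.of_forall fun z => (hu.differentiable (by norm_num) z)
  have hpd_va : ∀ i, DifferentiableAt ℝ (pd i (fun y => v y ^ a)) x :=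
    fun i => diff_pd_rpow hv (hvp x) a i
  have hpd_cva : ∀ i, DifferentiableAt ℝ (pd i (fun y => c * v y ^ a)) x :=
    fun i => diff_pd_const_mul hva_diff (hpd_va i) c
  have hlap1 : lap (fun y => u y - c * v y ^ a) x
      = lap u x - lap (fun y => c * v y ^ a) x :=
    lap_sub_at hu_diff hcva_diff (fun i => differentiable_pd hu i x) hpd_cva
  have hlap2 : lap (fun y => c * v y ^ a) x = c * lap (fun y => v y ^ a) x :=
    lap_const_mul_at hva_diff hpd_va c
  have hlap3 : lap (fun y => v y ^ a) x
      = a * v x ^ (a - 1) * lap v x + a * (a - 1) * v x ^ (a - 2) * ∑ i, (pd i v x) ^ 2 :=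
    lap_rpow_at hv (hvp x) a
  have hlapu : lap u x = -(v x ^ p) := by linarith [hequ x]
  have hlapv : lap v x = -(u x ^ θ) := by linarith [heqv x]
  have hS : 0 ≤ ∑ i, (pd i v x) ^ 2 :=
    Finset.sum_nonneg fun i _ => sq_nonneg _
  have hsign : 0 ≤ c * (a * (1 - a) * v x ^ (a - 2) * ∑ i, (pd i v x) ^ 2) := by
    have h1a : 0 ≤ 1 - a := by linarith
    have hv2 : 0 ≤ v x ^ (a - 2) := (Real.rpow_pos_of_pos (hvp x) _).le
    exact mul_nonneg hcpos.le
      (mul_nonneg (mul_nonneg (mul_nonneg hapos.le h1a) hv2) hS)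
  have harith := key_arith hp hpθ ha hc hβ (hup x) (hvp x) hWx
  rw [hlap1, hlap2, hlap3, hlapu, hlapv]
  nlinarith [harith, hsign]

set_option maxHeartbeats 1000000 in
/-- Master estimate: `w x₀ = u x₀ - c v x₀ ^ a ≤ 0`. -/
lemma w_nonpos {p θ a c β : ℝ} (hp : 1 < p) (hpθ : p ≤ θ)
    (ha : a = (p + 1) / (θ + 1)) (hc : c = a ^ (-(θ + 1)⁻¹)) (hβ : β = θ - 1 / a)
    {u v : EuclideanSpace ℝ (Fin N) → ℝ}
    (hu : ContDiff ℝ 2 u) (hv : ContDiff ℝ 2 v)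
    (hup : ∀ x, 0 < u x) (hvp : ∀ x, 0 < v x)
    (hequ : ∀ x, -lap u x = v x ^ p) (heqv : ∀ x, -lap v x = u x ^ θ)
    (x₀ : EuclideanSpace ℝ (Fin N)) : u x₀ - c * v x₀ ^ a ≤ 0 := by
  obtain ⟨hapos, ha1, hc1, hcpos, hβpos, haθ, hcθ⟩ := const_facts hp hpθ ha hc hβ
  set w : EuclideanSpace ℝ (Fin N) → ℝ := fun y => u y - c * v y ^ a with hwdef
  have hva2 : ContDiff ℝ 2 (fun y => v y ^ a) := by
    rw [contDiff_iff_contDiffAt]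
    intro z
    exact hv.contDiffAt.rpow_const_of_ne (hvp z).ne'
  have hw2 : ContDiff ℝ 2 w := hu.sub (contDiff_const.mul hva2)
  have hwcont : Continuous w := hw2.continuous
  set γ : ℝ := 2 / β with hγdef
  have hγpos : 0 < γ := by rw [hγdef]; positivity
  set Cg : ℝ := 2 * (N : ℝ) * γ + 4 * γ * (γ + 1) with hCgdef
  have hCgpos : 0 < Cg := by rw [hCgdef]; positivity
  set K : ℝ := (Cg / a) ^ β⁻¹ with hKdef
  have hKpos : 0 < K := Real.rpow_pos_of_pos (div_pos hCgpos hapos) _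
  suffices hallR : ∀ R : ℝ, 1 ≤ R → w x₀ ≤ K * R ^ (-(2 / β)) by
    have hten : Filter.Tendsto (fun R : ℝ => K * R ^ (-(2 / β))) atTop (𝓝 (K * 0)) :=
      (tendsto_rpow_neg_atTop (by positivity)).const_mul K
    rw [mul_zero] at hten
    exact ge_of_tendsto hten (Filter.eventually_atTop.mpr ⟨1, hallR⟩)
  intro R hR
  have hRpos : 0 < R := lt_of_lt_of_le one_pos hR
  by_contra hgt
  push_neg at hgt
  set R2 : ℝ := R ^ (2 : ℝ) with hR2def
  have hR2pos : 0 < R2 := Real.rpow_pos_of_pos hRpos _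
  set A : ℝ := K * R ^ (2 / β) with hAdef
  have hApos : 0 < A := mul_pos hKpos (Real.rpow_pos_of_pos hRpos _)
  have hAβ : a * A ^ β = Cg * R2 := by
    have h1 : A ^ β = K ^ β * (R ^ (2 / β)) ^ β := by
      rw [hAdef, Real.mul_rpow hKpos.le (Real.rpow_pos_of_pos hRpos _).le]
    have h2 : K ^ β = Cg / a := by
      rw [hKdef, ← Real.rpow_mul (div_pos hCgpos hapos).le, inv_mul_cancel₀ hβpos.ne',
        Real.rpow_one]
    have h3 : (R ^ (2 / β)) ^ β = R2 := by
      rw [← Real.rpow_mul hRpos.le, div_mul_cancel₀ _ hβpos.ne', hR2def]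
    rw [h1, h2, h3]
    field_simp
  have hVx₀ : A * R2 ^ (-γ) = K * R ^ (-(2 / β)) := by
    have h1 : R2 ^ (-γ) = R ^ ((2 : ℝ) * (-γ)) := by
      rw [hR2def, ← Real.rpow_mul hRpos.le]
    rw [hAdef, h1, mul_assoc, ← Real.rpow_add hRpos]
    congr 1
    rw [hγdef]
    field_simp
    ring
  -- maximum of w on the big closed ball
  obtain ⟨xm, hxmmem, hxm⟩ := (isCompact_closedBall x₀ R).exists_isMaxOn
    (Set.nonempty_of_mem (Metric.mem_closedBall_self hRpos.le)) hwcont.continuousOn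
  set W : ℝ := max (w xm) 0 with hWdef
  have hW1 : (0 : ℝ) < W + 1 := by
    have h0 : (0:ℝ) ≤ W := le_max_right _ _
    linarith only [h0]
  -- choice of s₀ and the radius
  set s₀ : ℝ := min (R2 / 2) ((A / (W + 1)) ^ γ⁻¹) with hs₀def
  have hs₀pos : 0 < s₀ :=
    lt_min (by positivity) (Real.rpow_pos_of_pos (div_pos hApos hW1) _)
  have hs₀lt : s₀ < R2 := lt_of_le_of_lt (min_le_left _ _) (by linarith only [hR2pos])
  have hbound : W + 1 ≤ A * s₀ ^ (-γ) := by
    have h1 : s₀ ^ γ ≤ A / (W + 1) := by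
      calc s₀ ^ γ ≤ ((A / (W + 1)) ^ γ⁻¹) ^ γ :=
            Real.rpow_le_rpow hs₀pos.le (min_le_right _ _) hγpos.le
        _ = A / (W + 1) := by
            rw [← Real.rpow_mul (div_pos hApos hW1).le, inv_mul_cancel₀ hγpos.ne',
              Real.rpow_one]
    have h2 : (W + 1) * s₀ ^ γ ≤ A := by
      rw [mul_comm]
      exact (le_div_iff₀ hW1).mp h1
    rw [Real.rpow_neg hs₀pos.le]
    calc W + 1 = (W + 1) * s₀ ^ γ * (s₀ ^ γ)⁻¹ := by
          field_simp
      _ ≤ A * (s₀ ^ γ)⁻¹ := by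
          apply mul_le_mul_of_nonneg_right h2
          positivity
  set r2 : ℝ := R2 - s₀ with hr2def
  have hr2pos : 0 < r2 := by rw [hr2def]; linarith only [hs₀lt]
  set ρ : ℝ := Real.sqrt r2 with hρdef
  have hρpos : 0 < ρ := Real.sqrt_pos.mpr hr2pos
  have hρR : ρ ≤ R := by
    rw [hρdef]
    calc Real.sqrt r2 ≤ Real.sqrt R2 := Real.sqrt_le_sqrt (by rw [hr2def]; linarith only [hs₀pos])
      _ = R := by
          rw [hR2def, show (2:ℝ) = ((2:ℕ):ℝ) by norm_num, Real.rpow_natCast]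
          exact Real.sqrt_sq hRpos.le
  -- the barrier data
  set g : EuclideanSpace ℝ (Fin N) → ℝ := gf R2 x₀ with hgdef
  have hg2 : ContDiff ℝ 2 g := gf_contDiff R2 x₀
  have hqf : ∀ z, R2 - g z = ∑ j, (z j - x₀ j) * (z j - x₀ j) := by
    intro z
    rw [hgdef]
    unfold gf
    ring
  have hqfnn : ∀ z, 0 ≤ R2 - g z := by
    intro z
    rw [hqf z]
    exact Finset.sum_nonneg fun j _ => mul_self_nonneg _
  have hmem : ∀ z : EuclideanSpace ℝ (Fin N),
      z ∈ Metric.closedBall x₀ ρ ↔ R2 - g z ≤ r2 := by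
    intro z
    rw [Metric.mem_closedBall, EuclideanSpace.dist_eq]
    have hsum : ∑ i, dist (z i) (x₀ i) ^ 2 = R2 - g z := by
      rw [hqf z]
      refine Finset.sum_congr rfl fun i _ => ?_
      rw [Real.dist_eq, sq_abs]
      ring
    rw [hsum, hρdef]
    exact Real.sqrt_le_sqrt_iff hr2pos.le
  have hgpos : ∀ z ∈ Metric.closedBall x₀ ρ, s₀ ≤ g z := by
    intro z hz
    have h0 := (hmem z).mp hz
    rw [hr2def] at h0
    linarith only [h0]
  set Vb : EuclideanSpace ℝ (Fin N) → ℝ := fun z => A * g z ^ (-γ) with hVbdef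
  set F : EuclideanSpace ℝ (Fin N) → ℝ := fun z => w z - Vb z with hFdef
  have hFc : ContinuousOn F (Metric.closedBall x₀ ρ) := by
    rw [hFdef]
    apply ContinuousOn.sub hwcont.continuousOn
    rw [hVbdef]
    apply ContinuousOn.mul continuousOn_const
    apply ContinuousOn.rpow_const hg2.continuous.continuousOn
    intro z hz
    exact Or.inl (lt_of_lt_of_le hs₀pos (hgpos z hz)).ne'
  obtain ⟨y, hymem, hymax⟩ := (isCompact_closedBall x₀ ρ).exists_isMaxOn
    (Set.nonempty_of_mem (Metric.mem_closedBall_self hρpos.le)) hFc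
  have hymax' : ∀ z ∈ Metric.closedBall x₀ ρ, F z ≤ F y := fun z hz => hymax hz
  have hgx₀ : g x₀ = R2 := by
    have h0 : R2 - g x₀ = 0 := by
      rw [hqf x₀]
      simp
    linarith only [h0]
  -- F x₀ > 0
  have hVbx₀ : Vb x₀ = K * R ^ (-(2 / β)) := by
    rw [hVbdef]
    simp only
    rw [hgx₀, hVx₀]
  have hm : 0 < F x₀ := by
    rw [hFdef]
    simp only
    rw [hVbx₀]
    linarith only [hgt]
  have hFy : 0 < F y :=
    lt_of_lt_of_le hm (hymax' x₀ (Metric.mem_closedBall_self hρpos.le))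
  -- the max point is interior
  have hVbpos : ∀ z, 0 < g z → 0 < Vb z := by
    intro z hz
    exact mul_pos hApos (Real.rpow_pos_of_pos hz _)
  have hyint : R2 - g y < r2 := by
    have hle : R2 - g y ≤ r2 := (hmem y).mp hymem
    rcases eq_or_lt_of_le hle with heq | hlt
    · exfalso
      have hgy : g y = s₀ := by rw [hr2def] at heq; linarith only [heq]
      have hywball : y ∈ Metric.closedBall x₀ R :=
        Metric.closedBall_subset_closedBall hρR hymem
      have hwy : w y ≤ W := le_trans (hxm hywball) (le_max_left _ _)
      have hFyneg : F y ≤ W - (W + 1) := by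
        rw [hFdef]
        simp only
        rw [hVbdef]
        simp only
        rw [hgy]
        exact sub_le_sub hwy hbound
      linarith only [hFy, hFyneg]
    · exact hlt
  have hgy0 : 0 < g y := lt_of_lt_of_le hs₀pos (hgpos y hymem)
  -- local max
  have hopen : IsOpen {z : EuclideanSpace ℝ (Fin N) | R2 - g z < r2} :=
    isOpen_lt (continuous_const.sub hg2.continuous) continuous_const
  have hlocmax : IsLocalMax F y := by
    filter_upwards [hopen.mem_nhds hyint] with z hz
    exact hymax' z ((hmem z).mpr (le_of_lt hz))
  -- differentiability data near y
  have hgev : ∀ᶠ z in 𝓝 y, 0 < g z := ev_pos hg2.continuous hgy0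
  have hgrpow_diff : ∀ᶠ z in 𝓝 y, DifferentiableAt ℝ (fun t => g t ^ (-γ)) z := by
    filter_upwards [hgev] with z hz
    exact (hg2.differentiable (by norm_num) z).rpow_const (Or.inl hz.ne')
  have hVb_diff : ∀ᶠ z in 𝓝 y, DifferentiableAt ℝ Vb z := by
    filter_upwards [hgrpow_diff] with z hz
    exact hz.const_mul A
  have hpd_Vb : ∀ i, DifferentiableAt ℝ (pd i Vb) y :=
    fun i => diff_pd_const_mul hgrpow_diff (diff_pd_rpow hg2 hgy0 (-γ) i) A
  have hw_diff : ∀ᶠ z in 𝓝 y, DifferentiableAt ℝ w z :=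
    Filter.Eventually.of_forall fun z => (hw2.differentiable (by norm_num)) z
  have hpd_w : ∀ i, DifferentiableAt ℝ (pd i w) y :=
    fun i => differentiable_pd hw2 i y
  -- laplacian inequalities
  have hlapF0 : lap F y ≤ 0 := by
    apply lap_nonpos_of_isLocalMax _ _ hlocmax
    · filter_upwards [hw_diff, hVb_diff] with z h1 h2
      exact h1.sub h2
    · intro i
      exact diff_pd_sub hw_diff hVb_diff (hpd_w i) (hpd_Vb i)
  have hlapF : lap F y = lap w y - lap Vb y :=
    lap_sub_at hw_diff hVb_diff hpd_w hpd_Vb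
  have hlapVb : lap Vb y = A * lap (fun t => g t ^ (-γ)) y :=
    lap_const_mul_at hgrpow_diff (fun i => diff_pd_rpow hg2 hgy0 (-γ) i) A
  have hlaprpow : lap (fun t => g t ^ (-γ)) y
      = (-γ) * g y ^ (-γ - 1) * lap g y
        + (-γ) * ((-γ) - 1) * g y ^ (-γ - 2) * ∑ i, (pd i g y) ^ 2 :=
    lap_rpow_at hg2 hgy0 (-γ)
  have hlapg : lap g y = -(2 * N) := lap_gf R2 x₀ y
  have hsumg : ∑ i, (pd i g y) ^ 2 = 4 * (R2 - g y) := sum_pd_gf_sq R2 x₀ y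
  -- the barrier inequality  lap Vb y ≤ a * (Vb y)^(1+β)
  have hP2pos : 0 < g y ^ (-γ - 2) := Real.rpow_pos_of_pos hgy0 _
  have hP1 : g y ^ (-γ - 1) = g y ^ (-γ - 2) * g y := by
    rw [show -γ - 1 = (-γ - 2) + 1 by ring, Real.rpow_add hgy0, Real.rpow_one]
  have hgleR2 : g y ≤ R2 := by have h0 := hqfnn y; linarith only [h0]
  have hRHS : a * Vb y ^ (1 + β) = A * (Cg * R2) * g y ^ (-γ - 2) := by
    have e1 : Vb y ^ (1 + β) = A ^ (1 + β) * (g y ^ (-γ)) ^ (1 + β) := by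
      rw [hVbdef]
      simp only
      rw [Real.mul_rpow hApos.le (Real.rpow_pos_of_pos hgy0 _).le]
    have e2 : (g y ^ (-γ)) ^ (1 + β) = g y ^ (-γ - 2) := by
      rw [← Real.rpow_mul hgy0.le]
      congr 1
      have hγβ : γ * β = 2 := by rw [hγdef]; field_simp
      linear_combination -hγβ
    have e3 : A ^ (1 + β) = A * A ^ β := by
      rw [Real.rpow_add hApos, Real.rpow_one]
    rw [e1, e2, e3, ← hAβ]
    ring
  have hinner : 2 * (N : ℝ) * γ * g y + 4 * γ * (γ + 1) * (R2 - g y) ≤ Cg * R2 := by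
    have t1 : 0 ≤ 2 * (N : ℝ) * γ * (R2 - g y) := by
      apply mul_nonneg _ (hqfnn y)
      positivity
    have t2 : 0 ≤ 4 * γ * (γ + 1) * g y := by
      apply mul_nonneg _ hgy0.le
      positivity
    rw [hCgdef]
    linarith only [t1, t2]
  have hbarrier : lap Vb y ≤ a * Vb y ^ (1 + β) := by
    rw [hlapVb, hlaprpow, hlapg, hsumg, hRHS, hP1]
    calc A * (-γ * (g y ^ (-γ - 2) * g y) * -(2 * ↑N)
          + -γ * (-γ - 1) * g y ^ (-γ - 2) * (4 * (R2 - g y)))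
        = A * (g y ^ (-γ - 2) * (2 * (N : ℝ) * γ * g y + 4 * γ * (γ + 1) * (R2 - g y))) := by
          ring
      _ ≤ A * (g y ^ (-γ - 2) * (Cg * R2)) :=
          mul_le_mul_of_nonneg_left
            (mul_le_mul_of_nonneg_left hinner hP2pos.le) hApos.le
      _ = A * (Cg * R2) * g y ^ (-γ - 2) := by ring
  -- the Souplet inequality at y
  have hwy : 0 < w y := by
    have h1 : 0 < Vb y := hVbpos y hgy0
    have h2 : F y = w y - Vb y := rfl
    linarith only [h1, h2, hFy]
  have hkey := key_diffineq hp hpθ ha hc hβ hu hv hup hvp hequ heqv y hwy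
  rw [← hwdef] at hkey
  have hwy_eq : w y = u y - c * v y ^ a := rfl
  rw [← hwy_eq] at hkey
  -- strict comparison of the two rpow terms
  have hVblt : Vb y < w y := by
    have h2 : F y = w y - Vb y := rfl
    linarith only [h2, hFy]
  have hstrict : a * Vb y ^ (1 + β) < a * w y ^ (1 + β) := by
    apply mul_lt_mul_of_pos_left _ hapos
    exact Real.rpow_lt_rpow (hVbpos y hgy0).le hVblt (by linarith only [hβpos])
  have hlapFy : lap F y = lap w y - lap Vb y := hlapF
  linarith only [hkey, hbarrier, hstrict, hlapF0, hlapFy]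


end LE10

open LE10 in
/-- Pointwise comparison `(θ+1)v^{p+1} ≥ (p+1)u^{θ+1}` for any positive
solution of the Lane–Emden system with `1 < p ≤ θ`. -/
theorem pointwise_comparison (N : ℕ) (hN : 0 < N) (p θ : ℝ) (hp : 1 < p) (hpθ : p ≤ θ)
    (u v : EuclideanSpace ℝ (Fin N) → ℝ) (hsol : IsPositiveSolution p θ u v) :
    ∀ x, (p + 1) * u x ^ (θ + 1) ≤ (θ + 1) * v x ^ (p + 1) := by
  obtain ⟨hu, hv, hup, hvp, hequ, heqv⟩ := hsol
  intro x
  have h2u : ContDiff ℝ 2 u := hu.of_le (WithTop.coe_le_coe.mpr le_top)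
  have h2v : ContDiff ℝ 2 v := hv.of_le (WithTop.coe_le_coe.mpr le_top)
  obtain ⟨hapos, ha1, hc1, hcpos, hβpos, haθ, hcθ⟩ :=
    const_facts hp hpθ (a := (p + 1) / (θ + 1)) rfl
      (c := ((p + 1) / (θ + 1)) ^ (-(θ + 1)⁻¹)) rfl
      (β := θ - 1 / ((p + 1) / (θ + 1))) rfl
  have hw := w_nonpos hp hpθ (a := (p + 1) / (θ + 1)) rfl
    (c := ((p + 1) / (θ + 1)) ^ (-(θ + 1)⁻¹)) rfl
    (β := θ - 1 / ((p + 1) / (θ + 1))) rfl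
    h2u h2v hup hvp hequ heqv x
  set a : ℝ := (p + 1) / (θ + 1) with hadef
  set c : ℝ := a ^ (-(θ + 1)⁻¹) with hcdef
  have hp1 : (0:ℝ) < p + 1 := by linarith
  have hθ1 : (0:ℝ) < θ + 1 := by linarith
  have hue : u x ≤ c * v x ^ a := by linarith only [hw]
  have h1 : u x ^ (θ + 1) ≤ (c * v x ^ a) ^ (θ + 1) :=
    Real.rpow_le_rpow (hup x).le hue (by linarith)
  have h2 : (c * v x ^ a) ^ (θ + 1) = a⁻¹ * v x ^ (p + 1) := by
    rw [Real.mul_rpow hcpos.le (Real.rpow_pos_of_pos (hvp x) a).le, hcθ,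
      ← Real.rpow_mul (hvp x).le, haθ]
  have h3 : (p + 1) * a⁻¹ = θ + 1 := by
    rw [hadef, inv_div]
    field_simp
  calc (p + 1) * u x ^ (θ + 1) ≤ (p + 1) * (a⁻¹ * v x ^ (p + 1)) := by
        apply mul_le_mul_of_nonneg_left _ hp1.le
        rw [← h2]
        exact h1
    _ = ((p + 1) * a⁻¹) * v x ^ (p + 1) := by ring
    _ = (θ + 1) * v x ^ (p + 1) := by rw [h3]
end
end

section
/- Let N be a positive integer and let f, g : ℝ → ℝ be continuously differentiable functions that are positive and increasing on (0, ∞). Let u, v : ℝ^N → ℝ be smooth, everywhere positive, and satisfy −Δu = f(v) and −Δv = g(u) on ℝ^N, and suppose (u, v) is stable, i.e., there exist smooth functions ζ, χ : ℝ^N → ℝ with ζ > 0 and χ > 0 everywhere such that −Δζ = f'(v)·χ and −Δχ = g'(u)·ζ on ℝ^N. Then for every smooth compactly supported function φ : ℝ^N → ℝ: ∫_{ℝ^N} √(f'(v(x))·g'(u(x)))·φ(x)² dx ≤ ∫_{ℝ^N} |∇φ(x)|² dx. -/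
open MeasureTheory

noncomputable section

section AuxLemmas

variable {N : ℕ}

local notation "E" => EuclideanSpace ℝ (Fin N)

lemma fderiv_eq_inner_gradient (φ : E → ℝ) (x y : E) :
    fderiv ℝ φ x y = inner ℝ (gradient φ x) y := by
  rw [gradient, ← InnerProductSpace.toDual_apply_apply, LinearIsometryEquiv.apply_symm_apply]

lemma norm_gradient_sq (φ : E → ℝ) (x : E) :
    ‖gradient φ x‖ ^ 2 = ∑ i, (fderiv ℝ φ x (EuclideanSpace.single i 1)) ^ 2 := by
  have h1 : ∀ i, fderiv ℝ φ x (EuclideanSpace.single i 1) = gradient φ x i := by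
    intro i
    rw [fderiv_eq_inner_gradient]
    rw [EuclideanSpace.inner_single_right]
    simp
  simp_rw [h1]
  rw [EuclideanSpace.norm_eq, Real.sq_sqrt (by positivity)]
  simp [sq_abs]

lemma integral_fderiv_apply_eq_zero {F : E → ℝ}
    (hF : ContDiff ℝ (⊤ : ℕ∞) F) (hFc : HasCompactSupport F) (v : E) :
    ∫ x, fderiv ℝ F x v = 0 := by
  obtain ⟨C, hC⟩ := ContDiff.lipschitzWith_of_hasCompactSupport hFc hF (by simp)
  have h0 : LipschitzWith 0 (fun _ : E => (1 : ℝ)) := LipschitzWith.const 1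
  have h := LipschitzWith.integral_lineDeriv_mul_eq (μ := volume) h0 hC hFc (-v)
  have hl : ∀ x : E, lineDeriv ℝ (fun _ : E => (1 : ℝ)) x (-v) = 0 := by
    intro x
    simp [lineDeriv]
  have hr : ∀ x : E, lineDeriv ℝ F x (- -v) = fderiv ℝ F x v := by
    intro x
    rw [neg_neg]
    exact (hF.differentiable (by simp) x).lineDeriv_eq_fderiv
  simp only [hl, zero_mul, integral_zero, hr, mul_one] at h
  exact h.symm

lemma continuous_fderiv_apply {ψ : E → ℝ} (hψ : ContDiff ℝ (⊤ : ℕ∞) ψ) (v : E) :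
    Continuous fun x => fderiv ℝ ψ x v :=
  (((hψ.fderiv_right (m := (⊤ : ℕ∞)) (by simp))).clm_apply contDiff_const).continuous

lemma contDiff_fderiv_apply {ψ : E → ℝ} (hψ : ContDiff ℝ (⊤ : ℕ∞) ψ) (v : E) :
    ContDiff ℝ (⊤ : ℕ∞) fun x => fderiv ℝ ψ x v :=
  ((hψ.fderiv_right (m := (⊤ : ℕ∞)) (by simp))).clm_apply contDiff_const

lemma continuous_lap {ψ : E → ℝ} (hψ : ContDiff ℝ (⊤ : ℕ∞) ψ) : Continuous (lap ψ) := by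
  unfold lap
  exact continuous_finset_sum _ fun i _ =>
    continuous_fderiv_apply (contDiff_fderiv_apply hψ _) _

/-- Key inequality: for a smooth positive `w` and a test function `φ`,
`∫ (-Δw/w) φ² ≤ ∫ ‖∇φ‖²`. -/
lemma key_ineq (w φ : E → ℝ) (hw : ContDiff ℝ (⊤ : ℕ∞) w) (hwpos : ∀ x, 0 < w x)
    (hφ : ContDiff ℝ (⊤ : ℕ∞) φ) (hφc : HasCompactSupport φ) :
    ∫ x, (-lap w x / w x) * φ x ^ 2 ≤ ∫ x, ‖gradient φ x‖ ^ 2 := by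
  classical
  set e : Fin N → E := fun i => EuclideanSpace.single i 1 with he
  set h : E → ℝ := fun y => φ y * φ y * (w y)⁻¹ with hh_def
  have hwne : ∀ x, w x ≠ 0 := fun x => (hwpos x).ne'
  have hh : ContDiff ℝ (⊤ : ℕ∞) h := (hφ.mul hφ).mul (hw.inv hwne)
  have hhc : HasCompactSupport h := by
    apply hφc.mono
    intro x hx
    simp only [Function.mem_support] at hx ⊢
    intro h0
    apply hx
    simp [hh_def, h0]
  -- the coordinate derivatives of w
  set W : Fin N → E → ℝ := fun i y => fderiv ℝ w y (e i) with hW_def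
  have hWc : ∀ i, ContDiff ℝ (⊤ : ℕ∞) (W i) := fun i => contDiff_fderiv_apply hw (e i)
  -- the vector field components
  set G : Fin N → E → ℝ := fun i y => h y * W i y with hG_def
  have hGc : ∀ i, ContDiff ℝ (⊤ : ℕ∞) (G i) := fun i => hh.mul (hWc i)
  have hGs : ∀ i, HasCompactSupport (G i) := by
    intro i
    apply hhc.mono
    intro x hx
    simp only [Function.mem_support] at hx ⊢
    intro h0
    apply hx
    simp [hG_def, h0]
  have hz : ∀ i, ∫ x, fderiv ℝ (G i) x (e i) = 0 := fun i =>
    integral_fderiv_apply_eq_zero (hGc i) (hGs i) (e i)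
  -- integrability of all pieces
  have hint : ∀ i, Integrable (fun x => fderiv ℝ (G i) x (e i)) := by
    intro i
    apply (continuous_fderiv_apply (hGc i) (e i)).integrable_of_hasCompactSupport
    apply ((hGs i).fderiv (𝕜 := ℝ)).mono
    intro x hx
    simp only [Function.mem_support] at hx ⊢
    intro h0
    apply hx
    rw [h0]
    simp
  have hzsum : ∫ x, ∑ i, fderiv ℝ (G i) x (e i) = 0 := by
    rw [integral_finset_sum _ (fun i _ => hint i)]
    simp [hz]
  -- pointwise expansion of the divergence
  have hpt : ∀ x, ∑ i, fderiv ℝ (G i) x (e i)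
      = h x * lap w x + ∑ i, fderiv ℝ h x (e i) * W i x := by
    intro x
    have hterm : ∀ i, fderiv ℝ (G i) x (e i)
        = h x * fderiv ℝ (W i) x (e i) + fderiv ℝ h x (e i) * W i x := by
      intro i
      have h1 : HasFDerivAt h (fderiv ℝ h x) x := (hh.differentiable (by simp) x).hasFDerivAt
      have h2 : HasFDerivAt (W i) (fderiv ℝ (W i) x) x :=
        ((hWc i).differentiable (by simp) x).hasFDerivAt
      have h3 := (h1.mul h2).fderiv
      have : fderiv ℝ (G i) x = h x • fderiv ℝ (W i) x + W i x • fderiv ℝ h x := h3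
      rw [this]
      simp [smul_eq_mul]
      ring
    rw [Finset.sum_congr rfl fun i _ => hterm i, Finset.sum_add_distrib, ← Finset.mul_sum]
    rfl
  -- integrability of the two pieces
  have hA : Integrable (fun x => h x * lap w x) := by
    apply (hh.continuous.mul (continuous_lap hw)).integrable_of_hasCompactSupport
    apply hhc.mono
    intro x hx
    simp only [Function.mem_support] at hx ⊢
    intro h0
    apply hx
    simp [h0]
  have hB : Integrable (fun x => ∑ i, fderiv ℝ h x (e i) * W i x) := by
    apply Continuous.integrable_of_hasCompactSupport
    · exact continuous_finset_sum _ fun i _ =>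
        (continuous_fderiv_apply hh (e i)).mul (hWc i).continuous
    · apply (hhc.fderiv (𝕜 := ℝ)).mono
      intro x hx
      simp only [Function.mem_support] at hx ⊢
      intro h0
      apply hx
      rw [h0]
      simp
  -- hence ∫ h (-lap w) = ∫ ∑ ∂ᵢh ∂ᵢw
  have hmain : ∫ x, (-lap w x / w x) * φ x ^ 2 = ∫ x, ∑ i, fderiv ℝ h x (e i) * W i x := by
    have heq : ∀ x, (-lap w x / w x) * φ x ^ 2 = -(h x * lap w x) := by
      intro x
      simp only [hh_def]
      rw [div_eq_mul_inv]
      ring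
    rw [show (fun x => (-lap w x / w x) * φ x ^ 2) = fun x => -(h x * lap w x) from
      funext heq]
    have := hzsum
    rw [show (fun x : E => ∑ i, fderiv ℝ (G i) x (e i))
        = fun x => h x * lap w x + ∑ i, fderiv ℝ h x (e i) * W i x from funext hpt] at this
    rw [integral_add hA hB] at this
    rw [integral_neg]
    linarith
  rw [hmain]
  -- final pointwise estimate
  have hptle : ∀ x, ∑ i, fderiv ℝ h x (e i) * W i x ≤ ‖gradient φ x‖ ^ 2 := by
    intro x
    rw [norm_gradient_sq]
    apply Finset.sum_le_sum
    intro i _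
    -- compute fderiv h x (e i)
    have hφx : HasFDerivAt φ (fderiv ℝ φ x) x := (hφ.differentiable (by simp) x).hasFDerivAt
    have hwx : HasFDerivAt w (fderiv ℝ w x) x := (hw.differentiable (by simp) x).hasFDerivAt
    have hinv : HasFDerivAt (fun y => (w y)⁻¹) ((-(w x ^ 2)⁻¹) • fderiv ℝ w x) x :=
      (hasDerivAt_inv (hwne x)).comp_hasFDerivAt x hwx
    have hmul := (hφx.mul hφx).mul hinv
    have hfd : fderiv ℝ h x = (φ x * φ x) • ((-(w x ^ 2)⁻¹) • fderiv ℝ w x)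
        + (w x)⁻¹ • (φ x • fderiv ℝ φ x + φ x • fderiv ℝ φ x) := hmul.fderiv
    rw [hfd]
    set P := fderiv ℝ φ x (e i) with hP
    set Q := fderiv ℝ w x (e i) with hQ
    set a := φ x
    set b := w x
    have hb : (0 : ℝ) < b := hwpos x
    have hbne : b ≠ 0 := hb.ne'
    simp only [ContinuousLinearMap.add_apply, ContinuousLinearMap.coe_smul',
      Pi.smul_apply, smul_eq_mul, W]
    have hcalc : (a * a * (-(b ^ 2)⁻¹ * Q) + b⁻¹ * (a * P + a * P)) * Q
        = P ^ 2 - (P * b - a * Q) ^ 2 / b ^ 2 := by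
      field_simp
      ring
    rw [hcalc]
    have := sq_nonneg (P * b - a * Q)
    have hb2 : (0 : ℝ) < b ^ 2 := by positivity
    nlinarith [div_nonneg this hb2.le]
  -- integrability of RHS
  have hRHS : Integrable (fun x => ‖gradient φ x‖ ^ 2) := by
    apply Continuous.integrable_of_hasCompactSupport
    · have hgc : Continuous fun x => gradient φ x := by
        apply Continuous.comp
        · exact (InnerProductSpace.toDual ℝ E).symm.continuous
        · exact (hφ.fderiv_right (m := (⊤ : ℕ∞)) (by simp)).continuous
      exact (hgc.norm).pow 2
    · apply (hφc.fderiv (𝕜 := ℝ)).mono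
      intro x hx
      simp only [Function.mem_support] at hx ⊢
      intro h0
      apply hx
      have hg : gradient φ x = 0 := by rw [gradient, h0]; simp
      rw [hg]
      simp
  exact integral_mono hB hRHS hptle


end AuxLemmas

lemma deriv_nonneg_of_strictMonoOn {f : ℝ → ℝ} {t : ℝ} (hf : DifferentiableAt ℝ f t)
    (ht : 0 < t) (hm : StrictMonoOn f (Set.Ioi 0)) : 0 ≤ deriv f t := by
  have h2 : Filter.Tendsto (slope f t) (nhdsWithin t (Set.Ioi t)) (nhds (deriv f t)) :=
    (hasDerivAt_iff_tendsto_slope.1 hf.hasDerivAt).mono_left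
      (nhdsWithin_mono t fun y hy => ne_of_gt hy)
  refine ge_of_tendsto h2 ?_
  filter_upwards [self_mem_nhdsWithin] with y hy
  have hty : t < y := hy
  have h1 : f t ≤ f y := (hm ht (ht.trans hty) hty).le
  rw [slope_def_field]
  exact div_nonneg (sub_nonneg.2 h1) (sub_nonneg.2 hty.le)

/-- Stability of a solution of `−Δu = f(v)`, `−Δv = g(u)` on `ℝ^N`
yields the inequality `∫ √(f'(v)g'(u)) φ² ≤ ∫ |∇φ|²` for all test functions `φ`. -/
theorem stability_inequality (N : ℕ) (hN : 0 < N) (f g : ℝ → ℝ)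
    (hf : ContDiff ℝ 1 f) (hg : ContDiff ℝ 1 g)
    (hfpos : ∀ s : ℝ, 0 < s → 0 < f s) (hgpos : ∀ s : ℝ, 0 < s → 0 < g s)
    (hfmono : StrictMonoOn f (Set.Ioi 0)) (hgmono : StrictMonoOn g (Set.Ioi 0))
    (u v : EuclideanSpace ℝ (Fin N) → ℝ)
    (hu : ContDiff ℝ (⊤ : ℕ∞) u) (hv : ContDiff ℝ (⊤ : ℕ∞) v)
    (hupos : ∀ x, 0 < u x) (hvpos : ∀ x, 0 < v x)
    (hequ : ∀ x, -lap u x = f (v x)) (heqv : ∀ x, -lap v x = g (u x))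
    (hstab : ∃ ζ χ : EuclideanSpace ℝ (Fin N) → ℝ,
      ContDiff ℝ (⊤ : ℕ∞) ζ ∧ ContDiff ℝ (⊤ : ℕ∞) χ ∧ (∀ x, 0 < ζ x) ∧ (∀ x, 0 < χ x) ∧
      (∀ x, -lap ζ x = deriv f (v x) * χ x) ∧
      (∀ x, -lap χ x = deriv g (u x) * ζ x))
    (φ : EuclideanSpace ℝ (Fin N) → ℝ) (hφ : ContDiff ℝ (⊤ : ℕ∞) φ)
    (hφc : HasCompactSupport φ) :
    ∫ x, Real.sqrt (deriv f (v x) * deriv g (u x)) * φ x ^ 2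
      ≤ ∫ x, ‖gradient φ x‖ ^ 2 := by
    classical
  obtain ⟨ζ, χ, hζ, hχ, hζpos, hχpos, heζ, heχ⟩ := hstab
  have key1 := key_ineq ζ φ hζ hζpos hφ hφc
  have key2 := key_ineq χ φ hχ hχpos hφ hφc
  have ha : ∀ x, 0 ≤ deriv f (v x) := fun x =>
    deriv_nonneg_of_strictMonoOn ((hf.differentiable one_ne_zero) (v x)) (hvpos x) hfmono
  have hb : ∀ x, 0 ≤ deriv g (u x) := fun x =>
    deriv_nonneg_of_strictMonoOn ((hg.differentiable one_ne_zero) (u x)) (hupos x) hgmono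
  have hpt : ∀ x, Real.sqrt (deriv f (v x) * deriv g (u x)) * φ x ^ 2
      ≤ (1/2 : ℝ) * ((-lap ζ x / ζ x) * φ x ^ 2 + (-lap χ x / χ x) * φ x ^ 2) := by
    intro x
    set s := -lap ζ x / ζ x with hsdef
    set t := -lap χ x / χ x with htdef
    have hs : 0 ≤ s := by
      rw [hsdef, heζ x]
      exact div_nonneg (mul_nonneg (ha x) (hχpos x).le) (hζpos x).le
    have ht : 0 ≤ t := by
      rw [htdef, heχ x]
      exact div_nonneg (mul_nonneg (hb x) (hζpos x).le) (hχpos x).le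
    have hζne := (hζpos x).ne'
    have hχne := (hχpos x).ne'
    have hprod : deriv f (v x) * deriv g (u x) = s * t := by
      rw [hsdef, htdef, heζ x, heχ x]
      field_simp
    rw [hprod]
    have hsq : Real.sqrt (s * t) ≤ (s + t) / 2 := by
      rw [Real.sqrt_mul hs]
      nlinarith [sq_nonneg (Real.sqrt s - Real.sqrt t), Real.sq_sqrt hs, Real.sq_sqrt ht,
        Real.sqrt_nonneg s, Real.sqrt_nonneg t]
    calc Real.sqrt (s * t) * φ x ^ 2 ≤ ((s + t) / 2) * φ x ^ 2 :=
          mul_le_mul_of_nonneg_right hsq (sq_nonneg _)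
      _ = (1/2 : ℝ) * (s * φ x ^ 2 + t * φ x ^ 2) := by ring
  have hIζ : Integrable (fun x => (-lap ζ x / ζ x) * φ x ^ 2) := by
    apply Continuous.integrable_of_hasCompactSupport
    · exact ((continuous_lap hζ).neg.div hζ.continuous fun x => (hζpos x).ne').mul
        (hφ.continuous.pow 2)
    · apply hφc.mono
      intro x hx
      simp only [Function.mem_support] at hx ⊢
      intro h0
      exact hx (by simp [h0])
  have hIχ : Integrable (fun x => (-lap χ x / χ x) * φ x ^ 2) := by
    apply Continuous.integrable_of_hasCompactSupport
    · exact ((continuous_lap hχ).neg.div hχ.continuous fun x => (hχpos x).ne').mul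
        (hφ.continuous.pow 2)
    · apply hφc.mono
      intro x hx
      simp only [Function.mem_support] at hx ⊢
      intro h0
      exact hx (by simp [h0])
  have hL : Integrable (fun x => Real.sqrt (deriv f (v x) * deriv g (u x)) * φ x ^ 2) := by
    apply Continuous.integrable_of_hasCompactSupport
    · exact (Real.continuous_sqrt.comp
        (((hf.continuous_deriv le_rfl).comp hv.continuous).mul
          ((hg.continuous_deriv le_rfl).comp hu.continuous))).mul (hφ.continuous.pow 2)
    · apply hφc.mono
      intro x hx
      simp only [Function.mem_support] at hx ⊢
      intro h0
      exact hx (by simp [h0])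
  calc ∫ x, Real.sqrt (deriv f (v x) * deriv g (u x)) * φ x ^ 2
      ≤ ∫ x, (1/2 : ℝ) * ((-lap ζ x / ζ x) * φ x ^ 2 + (-lap χ x / χ x) * φ x ^ 2) :=
        integral_mono hL ((hIζ.add hIχ).const_mul _) hpt
    _ = (1/2 : ℝ) * ((∫ x, (-lap ζ x / ζ x) * φ x ^ 2) + ∫ x, (-lap χ x / χ x) * φ x ^ 2) := by
        rw [MeasureTheory.integral_const_mul, integral_add hIζ hIχ]
    _ ≤ (1/2 : ℝ) * ((∫ x, ‖gradient φ x‖ ^ 2) + ∫ x, ‖gradient φ x‖ ^ 2) := by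
        linarith [key1, key2]
    _ = ∫ x, ‖gradient φ x‖ ^ 2 := by ring
end
end

section
/- Let N be a positive integer and let θ > 1 be a real number. Let (u, v) be a positive stable solution of the system −Δu = v, −Δv = u^θ on ℝ^N (the Lane-Emden system with p = 1). Then u is a stable solution of the biharmonic equation Δ²u = u^θ in the standard sense: for every smooth compactly supported function γ : ℝ^N → ℝ, ∫_{ℝ^N} θ·u^{θ−1}·γ² ≤ ∫_{ℝ^N} (Δγ)². -/
open MeasureTheory

noncomputable section

namespace LEAux

variable {N : ℕ}

/-- partial derivative in direction `e i`. -/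
def pd (i : Fin N) (f : EuclideanSpace ℝ (Fin N) → ℝ) (x : EuclideanSpace ℝ (Fin N)) : ℝ :=
  fderiv ℝ f x (EuclideanSpace.single i 1)

lemma lap_eq (f : EuclideanSpace ℝ (Fin N) → ℝ) (x : EuclideanSpace ℝ (Fin N)) :
    lap f x = ∑ i, pd i (pd i f) x := rfl

lemma contDiff_pd {f : EuclideanSpace ℝ (Fin N) → ℝ} (hf : ContDiff ℝ (⊤ : ℕ∞) f) (i : Fin N) :
    ContDiff ℝ (⊤ : ℕ∞) (pd i f) :=
  (hf.fderiv_right (by simp)).clm_apply contDiff_const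

lemma continuous_lap {f : EuclideanSpace ℝ (Fin N) → ℝ} (hf : ContDiff ℝ (⊤ : ℕ∞) f) :
    Continuous (lap f) := by
  have : Continuous (fun x => ∑ i, pd i (pd i f) x) :=
    continuous_finset_sum _ fun i _ => (contDiff_pd (contDiff_pd hf i) i).continuous
  exact this

lemma pd_hcs {f : EuclideanSpace ℝ (Fin N) → ℝ} (hf : HasCompactSupport f) (i : Fin N) :
    HasCompactSupport (pd i f) :=
  hf.fderiv_apply ℝ (EuclideanSpace.single i 1)

lemma hcs_zero : HasCompactSupport (fun _ : EuclideanSpace ℝ (Fin N) => (0:ℝ)) := by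
  rw [hasCompactSupport_def]
  simp

lemma lap_hcs {f : EuclideanSpace ℝ (Fin N) → ℝ} (hf : HasCompactSupport f) :
    HasCompactSupport (lap f) := by
  have : HasCompactSupport (fun x => ∑ i : Fin N, pd i (pd i f) x) := by
    classical
    induction (Finset.univ : Finset (Fin N)) using Finset.induction_on with
    | empty => simpa using hcs_zero
    | insert _ _ h ih =>
      simp only [Finset.sum_insert h]
      exact (pd_hcs (pd_hcs hf _) _).add ih
  exact this

lemma pd_mul {f g : EuclideanSpace ℝ (Fin N) → ℝ} (hf : Differentiable ℝ f)
    (hg : Differentiable ℝ g) (i : Fin N) (x : EuclideanSpace ℝ (Fin N)) :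
    pd i (fun y => f y * g y) x = f x * pd i g x + g x * pd i f x := by
  unfold pd
  rw [fderiv_fun_mul (hf x) (hg x)]
  simp

lemma pd_addf {f g : EuclideanSpace ℝ (Fin N) → ℝ} (hf : Differentiable ℝ f)
    (hg : Differentiable ℝ g) (i : Fin N) (x : EuclideanSpace ℝ (Fin N)) :
    pd i (fun y => f y + g y) x = pd i f x + pd i g x := by
  unfold pd
  rw [fderiv_fun_add (hf x) (hg x)]
  simp

lemma lap_mul {f g : EuclideanSpace ℝ (Fin N) → ℝ} (hf : ContDiff ℝ (⊤ : ℕ∞) f)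
    (hg : ContDiff ℝ (⊤ : ℕ∞) g) (x : EuclideanSpace ℝ (Fin N)) :
    lap (fun y => f y * g y) x
      = f x * lap g x + 2 * ∑ i, pd i f x * pd i g x + g x * lap f x := by
  have hfd := hf.differentiable (by simp)
  have hgd := hg.differentiable (by simp)
  have key : ∀ i : Fin N, pd i (pd i (fun y => f y * g y)) x
      = (f x * pd i (pd i g) x + pd i f x * pd i g x)
        + (g x * pd i (pd i f) x + pd i f x * pd i g x) := by
    intro i
    have h1 : pd i (fun y => f y * g y) = fun y => f y * pd i g y + g y * pd i f y :=
      funext (pd_mul hfd hgd i)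
    rw [h1]
    rw [pd_addf (f := fun y => f y * pd i g y) (g := fun y => g y * pd i f y) ((hfd.mul ((contDiff_pd hg i).differentiable (by simp))))
        ((hgd.mul ((contDiff_pd hf i).differentiable (by simp)))) i x]
    rw [pd_mul hfd ((contDiff_pd hg i).differentiable (by simp)) i x,
        pd_mul hgd ((contDiff_pd hf i).differentiable (by simp)) i x]
    ring
  rw [lap_eq, lap_eq, lap_eq]
  rw [Finset.sum_congr rfl (fun i _ => key i)]
  rw [Finset.sum_add_distrib, Finset.sum_add_distrib, Finset.sum_add_distrib,
      ← Finset.mul_sum, ← Finset.mul_sum]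
  ring

end LEAux

namespace LEAux

variable {N : ℕ}

lemma integrable_cc {f : EuclideanSpace ℝ (Fin N) → ℝ} (hf : Continuous f)
    (hfc : HasCompactSupport f) : Integrable f (volume : Measure (EuclideanSpace ℝ (Fin N))) :=
  hf.integrable_of_hasCompactSupport hfc

lemma byparts_pd {f h : EuclideanSpace ℝ (Fin N) → ℝ} (hf : ContDiff ℝ (⊤ : ℕ∞) f)
    (hh : ContDiff ℝ (⊤ : ℕ∞) h) (hhc : HasCompactSupport h) (i : Fin N) :
    ∫ x, f x * pd i h x = - ∫ x, pd i f x * h x := by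
  exact integral_mul_fderiv_eq_neg_fderiv_mul_of_integrable
    (integrable_cc ((contDiff_pd hf i).continuous.mul hh.continuous) hhc.mul_left)
    (integrable_cc (hf.continuous.mul (contDiff_pd hh i).continuous) (pd_hcs hhc i).mul_left)
    (integrable_cc (hf.continuous.mul hh.continuous) hhc.mul_left)
    (fun x _ => hf.differentiable (by simp) x) (fun x _ => hh.differentiable (by simp) x)

lemma byparts_pd2 {f h : EuclideanSpace ℝ (Fin N) → ℝ} (hf : ContDiff ℝ (⊤ : ℕ∞) f)
    (hh : ContDiff ℝ (⊤ : ℕ∞) h) (hhc : HasCompactSupport h) (i : Fin N) :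
    ∫ x, f x * pd i (pd i h) x = ∫ x, pd i (pd i f) x * h x := by
  rw [byparts_pd hf (contDiff_pd hh i) (pd_hcs hhc i) i]
  have : ∫ x, pd i f x * pd i h x = - ∫ x, pd i (pd i f) x * h x :=
    byparts_pd (contDiff_pd hf i) hh hhc i
  rw [this, neg_neg]

lemma byparts_lap {f h : EuclideanSpace ℝ (Fin N) → ℝ} (hf : ContDiff ℝ (⊤ : ℕ∞) f)
    (hh : ContDiff ℝ (⊤ : ℕ∞) h) (hhc : HasCompactSupport h) :
    ∫ x, f x * lap h x = ∫ x, lap f x * h x := by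
  have l1 : ∀ x, f x * lap h x = ∑ i, f x * pd i (pd i h) x := by
    intro x; rw [lap_eq, Finset.mul_sum]
  have l2 : ∀ x, lap f x * h x = ∑ i, pd i (pd i f) x * h x := by
    intro x; rw [lap_eq, Finset.sum_mul]
  rw [integral_congr_ae (Filter.Eventually.of_forall l1),
      integral_congr_ae (Filter.Eventually.of_forall l2),
      integral_finset_sum _ (f := fun i x => f x * pd i (pd i h) x) (fun i _ => integrable_cc
        (hf.continuous.mul (contDiff_pd (contDiff_pd hh i) i).continuous)
        (pd_hcs (pd_hcs hhc i) i).mul_left),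
      integral_finset_sum _ (f := fun i x => pd i (pd i f) x * h x) (fun i _ => integrable_cc
        ((contDiff_pd (contDiff_pd hf i) i).continuous.mul hh.continuous)
        hhc.mul_left)]
  exact Finset.sum_congr rfl fun i _ => byparts_pd2 hf hh hhc i

end LEAux


open LEAux in
theorem LEAux.main_aux (N : ℕ) (hN : 0 < N) (θ : ℝ) (hθ : 1 < θ)
    (u v : EuclideanSpace ℝ (Fin N) → ℝ)
    (hupos : ∀ x, 0 < u x)
    (ζ χ : EuclideanSpace ℝ (Fin N) → ℝ)
    (hζ : ContDiff ℝ (⊤ : ℕ∞) ζ) (hχ : ContDiff ℝ (⊤ : ℕ∞) χ)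
    (hζpos : ∀ x, 0 < ζ x) (hχpos : ∀ x, 0 < χ x)
    (hζeq : ∀ x, -lap ζ x = 1 * v x ^ ((1:ℝ) - 1) * χ x)
    (hχeq : ∀ x, -lap χ x = θ * u x ^ (θ - 1) * ζ x)
    (γ : EuclideanSpace ℝ (Fin N) → ℝ) (hγ : ContDiff ℝ (⊤ : ℕ∞) γ)
    (hγc : HasCompactSupport γ) :
    ∫ x, θ * u x ^ (θ - 1) * γ x ^ 2 ≤ ∫ x, (lap γ x) ^ 2 := by
  have hζlap : ∀ x, lap ζ x = - χ x := by
    intro x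
    have h0 := hζeq x
    rw [show (1:ℝ) - 1 = 0 by norm_num, Real.rpow_zero] at h0
    linarith
  have hχlap : ∀ x, lap χ x = -(θ * u x ^ (θ - 1) * ζ x) := fun x => by linarith [hχeq x]
  have hζne : ∀ x, ζ x ≠ 0 := fun x => ne_of_gt (hζpos x)
  set ψ : EuclideanSpace ℝ (Fin N) → ℝ := fun x => γ x * (ζ x)⁻¹ with hψdef
  have hψ : ContDiff ℝ (⊤ : ℕ∞) ψ := hγ.mul (hζ.inv hζne)
  have hψc : HasCompactSupport ψ := hγc.mul_right
  have hγψ : ∀ x, γ x = ζ x * ψ x := by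
    intro x; simp only [hψdef]
    rw [mul_comm (ζ x), mul_assoc, inv_mul_cancel₀ (hζne x), mul_one]
  set h : EuclideanSpace ℝ (Fin N) → ℝ := fun x => ζ x * (ψ x * ψ x) with hhdef
  have hh : ContDiff ℝ (⊤ : ℕ∞) h := hζ.mul (hψ.mul hψ)
  have hψψc : HasCompactSupport (fun x => ψ x * ψ x) := hψc.mul_right
  have hhc : HasCompactSupport h := hψψc.mul_left
  -- pointwise inequality
  have key : ∀ x, lap ζ x * lap h x ≤ (lap γ x) ^ 2 := by
    intro x
    have hγfun : γ = fun y => ζ y * ψ y := funext hγψ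
    have e1 : lap γ x = ζ x * lap ψ x + 2 * ∑ i, pd i ζ x * pd i ψ x + ψ x * lap ζ x := by
      rw [hγfun]; exact lap_mul hζ hψ x
    have e2 : lap h x = ζ x * lap (fun y => ψ y * ψ y) x
        + 2 * ∑ i, pd i ζ x * pd i (fun y => ψ y * ψ y) x
        + (ψ x * ψ x) * lap ζ x := lap_mul hζ (hψ.mul hψ) x
    have e3 : lap (fun y => ψ y * ψ y) x
        = ψ x * lap ψ x + 2 * ∑ i, pd i ψ x * pd i ψ x + ψ x * lap ψ x := lap_mul hψ hψ x
    have e4 : ∑ i, pd i ζ x * pd i (fun y => ψ y * ψ y) x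
        = 2 * (ψ x * ∑ i, pd i ζ x * pd i ψ x) := by
      rw [Finset.mul_sum, Finset.mul_sum]
      refine Finset.sum_congr rfl fun i _ => ?_
      rw [pd_mul (hψ.differentiable (by simp)) (hψ.differentiable (by simp)) i x]
      ring
    have hL : lap ζ x ≤ 0 := by rw [hζlap x]; linarith [hχpos x]
    have hS : (0:ℝ) ≤ ∑ i, pd i ψ x * pd i ψ x :=
      Finset.sum_nonneg fun i _ => mul_self_nonneg _
    rw [e1, e2, e3, e4]
    nlinarith [sq_nonneg (2 * ∑ i, pd i ζ x * pd i ψ x + ζ x * lap ψ x),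
      mul_nonneg (mul_nonneg (hζpos x).le (neg_nonneg.2 hL)) hS]
  -- integral identities
  have eq1 : ∫ x, θ * u x ^ (θ - 1) * γ x ^ 2 = ∫ x, (-lap χ x) * h x := by
    refine integral_congr_ae (Filter.Eventually.of_forall fun x => ?_)
    dsimp only
    rw [hχlap x, hγψ x]
    simp only [hhdef]
    ring
  have eq2 : ∫ x, (-lap χ x) * h x = ∫ x, lap ζ x * lap h x := by
    have b := byparts_lap hχ hh hhc
    calc ∫ x, (-lap χ x) * h x = - ∫ x, lap χ x * h x := by
          rw [← integral_neg]
          exact integral_congr_ae (Filter.Eventually.of_forall fun x => by ring)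
      _ = - ∫ x, χ x * lap h x := by rw [b]
      _ = ∫ x, (-χ x) * lap h x := by
          rw [← integral_neg]
          exact integral_congr_ae (Filter.Eventually.of_forall fun x => by ring)
      _ = ∫ x, lap ζ x * lap h x := by
          refine integral_congr_ae (Filter.Eventually.of_forall fun x => ?_)
          dsimp only
          rw [hζlap x]
  rw [eq1, eq2]
  have int1 : Integrable (fun x => lap ζ x * lap h x) volume :=
    integrable_cc ((continuous_lap hζ).mul (continuous_lap hh)) (lap_hcs hhc).mul_left
  have int2 : Integrable (fun x => (lap γ x) ^ 2) volume := by
    have e : (fun x => (lap γ x) ^ 2) = fun x => lap γ x * lap γ x := funext fun x => sq (lap γ x)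
    rw [e]
    exact integrable_cc ((continuous_lap hγ).mul (continuous_lap hγ)) (lap_hcs hγc).mul_left
  exact integral_mono int1 int2 key

/-- System stability implies scalar (biharmonic) stability: if `(u, v)`
is a positive stable solution of `−Δu = v`, `−Δv = u^θ` then
`∫ θ u^{θ−1} γ² ≤ ∫ (Δγ)²` for every test function `γ`. -/
theorem system_stable_implies_biharmonic_stable (N : ℕ) (hN : 0 < N) (θ : ℝ) (hθ : 1 < θ)
    (u v : EuclideanSpace ℝ (Fin N) → ℝ)
    (hsol : IsPositiveSolution 1 θ u v) (hstab : IsStable 1 θ u v)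
    (γ : EuclideanSpace ℝ (Fin N) → ℝ) (hγ : ContDiff ℝ (⊤ : ℕ∞) γ)
    (hγc : HasCompactSupport γ) :
    ∫ x, θ * u x ^ (θ - 1) * γ x ^ 2 ≤ ∫ x, (lap γ x) ^ 2 := by
  obtain ⟨hu, hv, hupos, hvpos, hueq, hveq⟩ := hsol
  obtain ⟨ζ, χ, hζ, hχ, hζpos, hχpos, hζeq, hχeq⟩ := hstab
  exact LEAux.main_aux N hN θ hθ u v hupos ζ χ hζ hχ hζpos hχpos hζeq hχeq γ hγ hγc
end
end

section
/- Let p, θ be real numbers with 1 ≤ p ≤ θ and let t₀⁻, t₀⁺ be defined from p and θ as in the context. Then t₀⁻ ≤ 1 ≤ t₀⁺, and both inequalities are strict unless p = θ = 1. Moreover, if 2 ≤ p ≤ θ then t₀⁻ < p/2 < t₀⁺. -/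
open MeasureTheory

noncomputable section

/-- Basic properties of `t₀⁻` and `t₀⁺`: `t₀⁻ ≤ 1 ≤ t₀⁺`, with strict
inequalities unless `p = θ = 1`; and `t₀⁻ < p/2 < t₀⁺` whenever `2 ≤ p`. -/
theorem t0_properties (p θ : ℝ) (hp : 1 ≤ p) (hpθ : p ≤ θ) :
    (t0minus p θ ≤ 1 ∧ 1 ≤ t0plus p θ) ∧
    (¬(p = 1 ∧ θ = 1) → t0minus p θ < 1 ∧ 1 < t0plus p θ) ∧
    (2 ≤ p → t0minus p θ < p / 2 ∧ p / 2 < t0plus p θ) := by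
  have hθ : 1 ≤ θ := le_trans hp hpθ
  have hθ1 : (0:ℝ) < θ + 1 := by linarith
  set z := zpar p θ with hzdef
  have hz1 : 1 ≤ z := by
    rw [hzdef, zpar, le_div_iff₀ hθ1]
    nlinarith [mul_nonneg (sub_nonneg.2 hθ) (mul_nonneg (sub_nonneg.2 hp) (by linarith : (0:ℝ) ≤ p + 2))]
  have hz0 : 0 ≤ z := by linarith
  set s := Real.sqrt z with hsdef
  have hs0 : 0 ≤ s := Real.sqrt_nonneg _
  have hs2 : s ^ 2 = z := Real.sq_sqrt hz0
  have hs1 : 1 ≤ s := by nlinarith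
  have hsz : s ≤ z := by nlinarith
  set w := Real.sqrt (z - s) with hwdef
  have hw0 : 0 ≤ w := Real.sqrt_nonneg _
  have hw2 : w ^ 2 = z - s := Real.sq_sqrt (by linarith)
  have hm : t0minus p θ = s - w := rfl
  have hpl : t0plus p θ = s + w := rfl
  refine ⟨⟨?_, ?_⟩, ?_, ?_⟩
  · -- t0minus ≤ 1
    rw [hm]
    nlinarith [sq_nonneg (w - s + 1), sq_nonneg (w + s - 1)]
  · rw [hpl]; linarith
  · intro hne
    have hz1' : 1 < z := by
      rw [hzdef, zpar, lt_div_iff₀ hθ1]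
      rcases eq_or_lt_of_le hp with h1 | h1
      · have hθ' : 1 < θ := by
          rcases eq_or_lt_of_le hθ with h2 | h2
          · exact absurd ⟨h1.symm, h2.symm⟩ hne
          · exact h2
        rw [← h1]; nlinarith
      · nlinarith [mul_pos (mul_pos (by linarith : (0:ℝ) < θ) (by linarith : (0:ℝ) < p - 1)) (by linarith : (0:ℝ) < p + 2)]
    have hs1' : 1 < s := by nlinarith
    constructor
    · rw [hm]
      nlinarith [sq_nonneg (w - s + 1), sq_nonneg (w + s - 1)]
    · rw [hpl]; linarith
  · intro hp2
    have hsp : p ≤ s := by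
      have hzp : p ^ 2 ≤ z := by
        rw [hzdef, zpar, le_div_iff₀ hθ1]
        nlinarith [mul_nonneg (by linarith : (0:ℝ) ≤ p) (sub_nonneg.2 hpθ)]
      nlinarith [sq_nonneg (s - p), sq_nonneg (s + p)]
    have hkey : p ^ 2 / 4 < (p - 1) * s := by
      nlinarith [mul_le_mul_of_nonneg_left hsp (by linarith : (0:ℝ) ≤ p - 1),
        mul_nonneg (sub_nonneg.2 hp2) (by linarith : (0:ℝ) ≤ p)]
    have hq : (s - p / 2) ^ 2 < w ^ 2 := by rw [hw2]; nlinarith [hkey, hs2]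
    have habs : |s - p / 2| < w := by
      have h : |s - p / 2| ^ 2 < w ^ 2 := by rwa [sq_abs]
      exact lt_of_pow_lt_pow_left₀ 2 hw0 h
    rcases abs_lt.1 habs with ⟨h1, h2⟩
    constructor
    · rw [hm]; linarith
    · rw [hpl]; linarith
end
end
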